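/- arXiv:1606.07655 — 6 statements merged into one kernel-verified Lean document; each statement's English description precedes it below -/
import Mathlib

section
/- Let S be a partial plane spread in PG(6,2) and let H be a hyperplane of V = F₂⁷. If i is the number of blocks of S contained in H, then 4·i ≤ 63 − 3·#S (in particular 3·#S + 4·i ≤ 63) and the number of holes of S contained in H equals 63 − 3·#S − 4·i. -/
/-!
A `d`-dimensional space over `F₂` has `2^d - 1` points, so `H` has `63`.
A block inside `H` covers `7` of them; a block not inside `H` meets it in a line and covers `3`.
Distinct blocks meet trivially, so they cover disjoint sets of points, and the remaining
`63 - 7 i - 3 (#S - i)` points of `H` are exactly its holes.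
-/

open Module

abbrev V2 : Type := Fin 7 → ZMod 2

/-- A partial plane spread in PG(6,2): a set of 3-dimensional subspaces of `V2 = F₂⁷`
(the blocks) any two distinct members of which intersect trivially. -/
def IsPPS (S : Set (Submodule (ZMod 2) V2)) : Prop :=
  (∀ B ∈ S, finrank (ZMod 2) ↥B = 3) ∧
    ∀ B₁ ∈ S, ∀ B₂ ∈ S, B₁ ≠ B₂ → B₁ ⊓ B₂ = ⊥

/-- A point (1-dimensional subspace) of `V2` is a hole of `S` if it is contained
in no block of `S`. -/
def IsHole (S : Set (Submodule (ZMod 2) V2)) (P : Submodule (ZMod 2) V2) : Prop :=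
  finrank (ZMod 2) ↥P = 1 ∧ ∀ B ∈ S, ¬ P ≤ B

/-- The number of holes of `S` contained in the subspace `X`. -/
noncomputable def holeCount (S : Set (Submodule (ZMod 2) V2))
    (X : Submodule (ZMod 2) V2) : ℕ :=
  {P | IsHole S P ∧ P ≤ X}.ncard

/-- The span `⟨N⟩` of the set of holes of `S`. -/
noncomputable def holeSpan (S : Set (Submodule (ZMod 2) V2)) : Submodule (ZMod 2) V2 :=
  sSup {P | IsHole S P}

/-- The number of blocks of `S` contained in the subspace `H`. -/
noncomputable def blocksIn (S : Set (Submodule (ZMod 2) V2))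
    (H : Submodule (ZMod 2) V2) : ℕ :=
  {B ∈ S | B ≤ H}.ncard

/-- `spec S i` = the number of hyperplanes of `V2` containing exactly `i` blocks of `S`. -/
noncomputable def spec (S : Set (Submodule (ZMod 2) V2)) (i : ℕ) : ℕ :=
  {H : Submodule (ZMod 2) V2 | finrank (ZMod 2) ↥H = 6 ∧ blocksIn S H = i}.ncard

namespace Submodule

variable {K V : Type*} [Field K] [AddCommGroup V] [Module K V]

def points (X : Submodule K V) : Set (Submodule K V) := {P | finrank K P = 1 ∧ P ≤ X}

theorem points_eq_image_map_subtype (X : Submodule K V) :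
    X.points = map X.subtype '' {Q | finrank K Q = 1} := by
  ext P
  constructor
  · rintro ⟨hP, hPX⟩
    refine ⟨comap X.subtype P, ?_, ?_⟩
    · rwa [Set.mem_ofPred_eq, ← finrank_map_subtype_eq, map_comap_subtype, inf_of_le_right hPX]
    · rw [map_comap_subtype, inf_of_le_right hPX]
  · rintro ⟨Q, hQ, rfl⟩
    exact ⟨(finrank_map_subtype_eq X Q).trans hQ, map_subtype_le X Q⟩

theorem ncard_points_eq_card_projectivization (X : Submodule K V) :
    X.points.ncard = Nat.card (Projectivization K X) := by
  rw [points_eq_image_map_subtype,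
    Set.InjOn.ncard_image (map_injective_of_injective X.injective_subtype).injOn,
    ← Nat.card_coe_set_eq]
  exact Nat.card_congr (Projectivization.equivSubmodule K X).symm

theorem ncard_points [Finite K] (X : Submodule K V) :
    X.points.ncard = ∑ i ∈ Finset.range (finrank K X), Nat.card K ^ i := by
  rw [ncard_points_eq_card_projectivization, Projectivization.card_of_finrank K X rfl]

theorem disjoint_points {X Y : Submodule K V} (h : Disjoint X Y) :
    Disjoint X.points Y.points := by
  refine Set.disjoint_left.2 fun P hX hY => ?_
  have hP : finrank K P = 1 := hX.1
  rw [disjoint_self.1 (h.mono hX.2 hY.2), finrank_bot] at hP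
  exact zero_ne_one hP

theorem finrank_inf_add_one_of_not_le [FiniteDimensional K V] {B H : Submodule K V}
    (hH : finrank K H + 1 = finrank K V) (hBH : ¬ B ≤ H) :
    finrank K ↥(B ⊓ H) + 1 = finrank K B := by
  have hsup : finrank K ↥(B ⊔ H) = finrank K V :=
    le_antisymm (finrank_le _) (hH ▸ finrank_lt_finrank_of_lt (right_lt_sup.2 hBH))
  have := finrank_sup_add_finrank_inf_eq B H
  omega

theorem ncard_uncovered_add_finsum_ncard_points_inf [Finite V] {S : Set (Submodule K V)}
    (hS : S.PairwiseDisjoint id) (X : Submodule K V) :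
    {P : Submodule K V | (finrank K P = 1 ∧ ∀ B ∈ S, ¬ P ≤ B) ∧ P ≤ X}.ncard
      + ∑ᶠ B ∈ S, (B ⊓ X).points.ncard = X.points.ncard := by
  have hcover : X.points = {P : Submodule K V | (finrank K P = 1 ∧ ∀ B ∈ S, ¬ P ≤ B) ∧ P ≤ X}
      ∪ ⋃ B ∈ S, (B ⊓ X).points := by
    ext P
    simp only [points, le_inf_iff, Set.mem_union, Set.mem_iUnion, Set.mem_ofPred_eq, exists_prop]
    grind
  have hdisj : S.PairwiseDisjoint fun B => (B ⊓ X).points := fun B₁ h₁ B₂ h₂ hne =>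
    disjoint_points ((hS h₁ h₂ hne).mono inf_le_left inf_le_left)
  rw [hcover, Set.ncard_union_eq, (Set.toFinite S).ncard_biUnion (fun _ _ => Set.toFinite _) hdisj]
  · refine Set.disjoint_left.2 fun P hP hcov => ?_
    obtain ⟨B, hB, hPB⟩ := Set.mem_iUnion₂.1 hcov
    exact hP.1.2 B hB (hPB.2.trans inf_le_left)

end Submodule

theorem Set.finsum_mem_eq_mul_ncard_sep_add_mul_ncard_sep_not {α : Type*} {S : Set α}
    (hS : S.Finite) (p : α → Prop) {f : α → ℕ} {a b : ℕ}
    (ha : ∀ x ∈ S, p x → f x = a) (hb : ∀ x ∈ S, ¬ p x → f x = b) :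
    ∑ᶠ x ∈ S, f x = a * {x ∈ S | p x}.ncard + b * {x ∈ S | ¬ p x}.ncard := by
  rw [← finsum_mem_inter_add_sdiff {x | p x} hS,
    finsum_mem_congr rfl fun x hx => (ha x hx.1 hx.2).trans (mul_one a).symm,
    finsum_mem_congr rfl fun x hx => (hb x hx.1 hx.2).trans (mul_one b).symm,
    ← mul_finsum_mem, ← mul_finsum_mem, finsum_one, finsum_one]
  rfl

theorem pps_hyperplane_holes (S : Set (Submodule (ZMod 2) V2)) (hS : IsPPS S)
    (H : Submodule (ZMod 2) V2) (hH : finrank (ZMod 2) ↥H = 6)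
    (i : ℕ) (hi : i = blocksIn S H) :
    4 * i ≤ 63 - 3 * S.ncard ∧ 3 * S.ncard + 4 * i ≤ 63 ∧
      holeCount S H = 63 - 3 * S.ncard - 4 * i := by
  subst hi
  obtain ⟨hdim, hdisj⟩ := hS
  have hcard (X : Submodule (ZMod 2) V2) :
      X.points.ncard = ∑ k ∈ Finset.range (finrank (ZMod 2) X), 2 ^ k := by
    simpa using X.ncard_points
  have hsum : ∑ᶠ B ∈ S, (B ⊓ H).points.ncard
      = 7 * blocksIn S H + 3 * {B ∈ S | ¬ B ≤ H}.ncard := by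
    refine Set.finsum_mem_eq_mul_ncard_sep_add_mul_ncard_sep_not (Set.toFinite S) (· ≤ H)
      (fun B hB hBH => ?_) (fun B hB hBH => ?_)
    · rw [inf_of_le_left hBH, hcard, hdim B hB]
      rfl
    · have := Submodule.finrank_inf_add_one_of_not_le (by simp [hH]) hBH
      rw [hdim B hB] at this
      rw [hcard, show finrank (ZMod 2) ↥(B ⊓ H) = 2 by omega]
      rfl
  have hholes : holeCount S H + ∑ᶠ B ∈ S, (B ⊓ H).points.ncard = 63 :=
    (Submodule.ncard_uncovered_add_finsum_ncard_points_inf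
      (fun B₁ h₁ B₂ h₂ hne => disjoint_iff.2 (hdisj B₁ h₁ B₂ h₂ hne)) H).trans
      (by rw [hcard, hH]; rfl)
  have hsplit : blocksIn S H + {B ∈ S | ¬ B ≤ H}.ncard = S.ncard :=
    Set.ncard_inter_add_ncard_sdiff_eq_ncard S {B | B ≤ H} (Set.toFinite S)
  omega
end

section
/- Let S be a partial plane spread in PG(6,2), let N be its (nonempty) set of holes, n = dim⟨N⟩, and for i ≥ 0 let a_i be the number of hyperplanes of V containing exactly i blocks of S. For j ≥ 0 let b_j be the number of subspaces T of ⟨N⟩ with dim T = n − 1 that contain exactly j holes. Then: if j < #N, j ≤ 63 − 3·#S and 4 divides 63 − 3·#S − j, one has 2^(7−n) · b_j = a_((63 − 3·#S − j)/4); for all other j one has b_j = 0. -/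
open Module

/-! ### Auxiliary lemmas -/

instance : Finite (Submodule (ZMod 2) V2) :=
  Finite.of_injective (fun U => (U : Set V2)) SetLike.coe_injective

instance : Finite (Module.Dual (ZMod 2) V2) :=
  Finite.of_injective (fun f => (f : V2 → ZMod 2)) DFunLike.coe_injective

lemma finrank_V2 : finrank (ZMod 2) V2 = 7 := by
  simp [V2]

lemma zmod2_eq_one {c : ZMod 2} (h : c ≠ 0) : c = 1 := by revert h; revert c; decide

lemma ncard_submodule {M : Type*} [AddCommGroup M] [Module (ZMod 2) M] [Finite M]
    (U : Submodule (ZMod 2) M) : Nat.card U = 2 ^ finrank (ZMod 2) U := by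
  have : Fintype U := Fintype.ofFinite U
  rw [Nat.card_eq_fintype_card, card_eq_pow_finrank (K := ZMod 2)]
  simp

lemma mem_span_f2 {v w : V2} : w ∈ Submodule.span (ZMod 2) {v} ↔ w = v ∨ w = 0 := by
  rw [Submodule.mem_span_singleton]
  constructor
  · rintro ⟨c, rfl⟩
    rcases eq_or_ne c 0 with rfl | hc
    · right; simp
    · left; rw [zmod2_eq_one hc, one_smul]
  · rintro (rfl | rfl)
    exacts [⟨1, one_smul _ _⟩, ⟨0, zero_smul _ _⟩]

lemma exists_gen {P : Submodule (ZMod 2) V2} (hP : finrank (ZMod 2) P = 1) :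
    ∃ v : V2, v ≠ 0 ∧ P = Submodule.span (ZMod 2) {v} := by
  have hbot : P ≠ ⊥ := by
    intro h; rw [h] at hP; simp at hP
  obtain ⟨v, hvP, hv⟩ := Submodule.exists_mem_ne_zero_of_ne_bot hbot
  refine ⟨v, hv, ?_⟩
  have hle : Submodule.span (ZMod 2) {v} ≤ P := by
    rw [Submodule.span_le]; simpa using hvP
  have := finrank_span_singleton (K := ZMod 2) hv
  exact (Submodule.eq_of_le_of_finrank_le hle (by omega)).symm

lemma holeCount_eq_vcount (S : Set (Submodule (ZMod 2) V2)) (X : Submodule (ZMod 2) V2) :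
    holeCount S X = {v : V2 | v ≠ 0 ∧ v ∈ X ∧ ∀ B ∈ S, v ∉ B}.ncard := by
  unfold holeCount
  have himg : {P | IsHole S P ∧ P ≤ X} =
      (fun v => Submodule.span (ZMod 2) {v}) '' {v : V2 | v ≠ 0 ∧ v ∈ X ∧ ∀ B ∈ S, v ∉ B} := by
    ext P
    constructor
    · rintro ⟨⟨h1, hB⟩, hX⟩
      obtain ⟨v, hv, rfl⟩ := exists_gen h1
      refine ⟨v, ⟨hv, hX (Submodule.mem_span_singleton_self v), fun B hB' hvB => ?_⟩, rfl⟩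
      exact hB B hB' (by rw [Submodule.span_le]; simpa using hvB)
    · rintro ⟨v, ⟨hv, hvX, hvB⟩, rfl⟩
      refine ⟨⟨finrank_span_singleton hv, fun B hB hle => ?_⟩, ?_⟩
      · exact hvB B hB (hle (Submodule.mem_span_singleton_self v))
      · rw [Submodule.span_le]; simpa using hvX
  rw [himg, Set.ncard_image_of_injOn]
  rintro v ⟨hv, -⟩ w ⟨hw, -⟩ h
  simp only at h
  have : v ∈ Submodule.span (ZMod 2) {w} := h ▸ Submodule.mem_span_singleton_self v
  rcases mem_span_f2.mp this with h' | h'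
  · exact h'
  · exact absurd h' hv

lemma ncard_nonzero (U : Submodule (ZMod 2) V2) :
    {v : V2 | v ≠ 0 ∧ v ∈ U}.ncard = 2 ^ finrank (ZMod 2) U - 1 := by
  have h1 : {v : V2 | v ≠ 0 ∧ v ∈ U} = (U : Set V2) \ {0} := by
    ext v; simp [and_comm]
  rw [h1, Set.ncard_diff_singleton_of_mem (Submodule.zero_mem U)]
  rw [show ((U : Set V2)).ncard = Nat.card U from (Nat.card_coe_set_eq _).symm]
  rw [ncard_submodule]

lemma key_filter (p : V2 → Prop) [DecidablePred p] :
    {v : V2 | p v}.ncard = (Finset.univ.filter p).card := by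
  rw [← Set.ncard_coe_finset]; congr 1; ext v; simp

lemma count_partition {S : Set (Submodule (ZMod 2) V2)} (hS : IsPPS S) (hfin : S.Finite)
    (X : Submodule (ZMod 2) V2) :
    holeCount S X + ∑ B ∈ hfin.toFinset, (2 ^ finrank (ZMod 2) ↥(B ⊓ X) - 1)
      = 2 ^ finrank (ZMod 2) ↥X - 1 := by
  classical
  set Fh := Finset.univ.filter (fun v : V2 => v ≠ 0 ∧ v ∈ X ∧ ∀ B ∈ S, v ∉ B) with hFh
  set FB := fun B : Submodule (ZMod 2) V2 =>
    Finset.univ.filter (fun v : V2 => v ≠ 0 ∧ v ∈ B ⊓ X) with hFB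
  have hunion : Fh ∪ hfin.toFinset.biUnion FB
      = Finset.univ.filter (fun v : V2 => v ≠ 0 ∧ v ∈ X) := by
    ext v
    simp only [hFh, hFB, Finset.mem_union, Finset.mem_biUnion, Finset.mem_filter,
      Finset.mem_univ, true_and, Set.Finite.mem_toFinset, Submodule.mem_inf]
    constructor
    · rintro (⟨h0, hX, -⟩ | ⟨B, hB, h0, -, hX⟩) <;> exact ⟨h0, by assumption⟩
    · rintro ⟨h0, hX⟩
      by_cases h : ∀ B ∈ S, v ∉ B
      · exact Or.inl ⟨h0, hX, h⟩
      · push_neg at h; obtain ⟨B, hB, hvB⟩ := h; exact Or.inr ⟨B, hB, h0, hvB, hX⟩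
  have hdisj : Disjoint Fh (hfin.toFinset.biUnion FB) := by
    rw [Finset.disjoint_left]
    intro v hv hv'
    simp only [hFh, Finset.mem_filter, Finset.mem_univ, true_and] at hv
    simp only [hFB, Finset.mem_biUnion, Finset.mem_filter, Finset.mem_univ, true_and,
      Set.Finite.mem_toFinset, Submodule.mem_inf] at hv'
    obtain ⟨B, hB, -, hvB, -⟩ := hv'
    exact hv.2.2 B hB hvB
  have hpair : ∀ B₁ ∈ hfin.toFinset, ∀ B₂ ∈ hfin.toFinset, B₁ ≠ B₂ →
      Disjoint (FB B₁) (FB B₂) := by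
    intro B₁ h1 B₂ h2 hne
    rw [Set.Finite.mem_toFinset] at h1 h2
    rw [Finset.disjoint_left]
    intro v hv hv'
    simp only [hFB, Finset.mem_filter, Finset.mem_univ, true_and, Submodule.mem_inf] at hv hv'
    have : v ∈ B₁ ⊓ B₂ := Submodule.mem_inf.mpr ⟨hv.2.1, hv'.2.1⟩
    rw [hS.2 B₁ h1 B₂ h2 hne] at this
    exact hv.1 (by simpa using this)
  have hcard := congrArg Finset.card hunion
  rw [Finset.card_union_of_disjoint hdisj, Finset.card_biUnion hpair] at hcard
  have e1 : Fh.card = holeCount S X := by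
    rw [holeCount_eq_vcount, key_filter]
  have e2 : ∀ B, (FB B).card = 2 ^ finrank (ZMod 2) ↥(B ⊓ X) - 1 := by
    intro B; rw [← key_filter, ncard_nonzero]
  have e3 : (Finset.univ.filter (fun v : V2 => v ≠ 0 ∧ v ∈ X)).card
      = 2 ^ finrank (ZMod 2) ↥X - 1 := by
    rw [← key_filter, ncard_nonzero]
  rw [e1, e3] at hcard
  rw [← hcard]
  congr 1
  exact Finset.sum_congr rfl fun B _ => (e2 B).symm

lemma blocksIn_eq_filter {S : Set (Submodule (ZMod 2) V2)} (hfin : S.Finite)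
    (X : Submodule (ZMod 2) V2) [DecidablePred (fun B : Submodule (ZMod 2) V2 => B ≤ X)] :
    blocksIn S X = (hfin.toFinset.filter (fun B => B ≤ X)).card := by
  rw [blocksIn, ← Set.ncard_coe_finset]
  congr 1; ext B; simp [Set.Finite.mem_toFinset]

lemma hyper_eq {S : Set (Submodule (ZMod 2) V2)} (hS : IsPPS S) (hfin : S.Finite)
    {H : Submodule (ZMod 2) V2} (hH : finrank (ZMod 2) H = 6) :
    holeCount S H + 4 * blocksIn S H + 3 * S.ncard = 63 := by
  classical
  have hpart := count_partition hS hfin H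
  have hsum : ∑ B ∈ hfin.toFinset, (2 ^ finrank (ZMod 2) ↥(B ⊓ H) - 1)
      = ∑ B ∈ hfin.toFinset, ((if B ≤ H then 4 else 0) + 3) := by
    refine Finset.sum_congr rfl fun B hB => ?_
    rw [Set.Finite.mem_toFinset] at hB
    have hB3 := hS.1 B hB
    by_cases h : B ≤ H
    · rw [if_pos h, inf_eq_left.mpr h, hB3]; norm_num
    · rw [if_neg h]
      have h1 := Submodule.finrank_sup_add_finrank_inf_eq B H
      have h2 : finrank (ZMod 2) ↥(B ⊔ H) ≤ finrank (ZMod 2) V2 := Submodule.finrank_le _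
      rw [finrank_V2] at h2
      have h3 : B ⊓ H < B := lt_of_le_of_ne inf_le_left (fun he => h (inf_eq_left.mp he))
      have h4 := Submodule.finrank_lt_finrank_of_lt h3
      have h5 : finrank (ZMod 2) ↥(B ⊓ H) = 2 := by omega
      rw [h5]; norm_num
  rw [hsum, Finset.sum_add_distrib, Finset.sum_const, ← Finset.sum_filter,
    Finset.sum_const, smul_eq_mul, smul_eq_mul] at hpart
  rw [← blocksIn_eq_filter hfin H] at hpart
  have hk : hfin.toFinset.card = S.ncard := (Set.ncard_eq_toFinset_card _ _).symm
  rw [hk, hH] at hpart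
  omega

lemma total_eq {S : Set (Submodule (ZMod 2) V2)} (hS : IsPPS S) (hfin : S.Finite) :
    {P | IsHole S P}.ncard + 7 * S.ncard = 127 := by
  have hpart := count_partition hS hfin ⊤
  have h1 : holeCount S ⊤ = {P | IsHole S P}.ncard := by
    unfold holeCount; congr 1; ext P; simp
  have h2 : finrank (ZMod 2) (⊤ : Submodule (ZMod 2) V2) = 7 := by
    rw [finrank_top, finrank_V2]
  have h3 : ∀ B ∈ hfin.toFinset, (2 ^ finrank (ZMod 2) ↥(B ⊓ ⊤) - 1) = 7 := by
    intro B hB; rw [Set.Finite.mem_toFinset] at hB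
    rw [inf_top_eq, hS.1 B hB]; norm_num
  rw [h1, h2, Finset.sum_congr rfl h3, Finset.sum_const, smul_eq_mul] at hpart
  have hk : hfin.toFinset.card = S.ncard := (Set.ncard_eq_toFinset_card _ _).symm
  rw [hk] at hpart
  omega

lemma exists_dual {H : Submodule (ZMod 2) V2} (hH : finrank (ZMod 2) H = 6) :
    ∃ f : Module.Dual (ZMod 2) V2, LinearMap.ker f = H := by
  have hq : finrank (ZMod 2) (V2 ⧸ H) = 1 := by
    have h1 := Submodule.finrank_quotient_add_finrank H
    rw [finrank_V2, hH] at h1; omega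
  have hq2 : finrank (ZMod 2) (V2 ⧸ H) = finrank (ZMod 2) (ZMod 2) := by
    rw [hq, finrank_self]
  obtain ⟨e⟩ := FiniteDimensional.nonempty_linearEquiv_of_finrank_eq hq2
  refine ⟨(e : (V2 ⧸ H) →ₗ[ZMod 2] ZMod 2) ∘ₗ H.mkQ, ?_⟩
  rw [LinearMap.ker_comp, LinearEquiv.ker, Submodule.comap_bot, Submodule.ker_mkQ]

lemma finrank_ker {f : Module.Dual (ZMod 2) V2} (hf : f ≠ 0) :
    finrank (ZMod 2) (LinearMap.ker f) = 6 := by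
  have h1 := LinearMap.finrank_range_add_finrank_ker f
  rw [finrank_V2] at h1
  have h2 : finrank (ZMod 2) (LinearMap.range f) ≤ finrank (ZMod 2) (ZMod 2) :=
    Submodule.finrank_le _
  rw [finrank_self] at h2
  have h3 : LinearMap.range f ≠ ⊥ := by
    intro h
    exact hf (LinearMap.range_eq_bot.mp h)
  have h4 : finrank (ZMod 2) (LinearMap.range f) ≠ 0 := by
    intro h
    exact h3 (Submodule.finrank_eq_zero.mp h)
  omega

lemma ker_inj {f g : Module.Dual (ZMod 2) V2} (hf : f ≠ 0)
    (h : LinearMap.ker f = LinearMap.ker g) : f = g := by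
  have hg : g ≠ 0 := by
    rintro rfl
    rw [LinearMap.ker_zero, LinearMap.ker_eq_top] at h
    exact hf h
  obtain ⟨v, hv⟩ := DFunLike.ne_iff.mp hf
  simp only [LinearMap.zero_apply] at hv
  have hfv : f v = 1 := zmod2_eq_one hv
  have hgv : g v = 1 := by
    apply zmod2_eq_one
    intro h0
    have : v ∈ LinearMap.ker g := h0
    rw [← h] at this
    exact hv this
  refine LinearMap.ext fun w => ?_
  have hker : w - (f w) • v ∈ LinearMap.ker f := by
    simp [map_sub, map_smul, hfv]
  rw [h] at hker
  have := (LinearMap.mem_ker).mp hker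
  rw [map_sub, map_smul, hgv, smul_eq_mul, mul_one, sub_eq_zero] at this
  exact this.symm

lemma finrank_ann (U : Submodule (ZMod 2) V2) :
    finrank (ZMod 2) U.dualAnnihilator + finrank (ZMod 2) U = 7 := by
  have h1 : finrank (ZMod 2) (V2 ⧸ U) = finrank (ZMod 2) U.dualAnnihilator :=
    LinearEquiv.finrank_eq (Subspace.quotEquivAnnihilator U)
  have h2 := Submodule.finrank_quotient_add_finrank U
  rw [finrank_V2] at h2
  omega

lemma fiber_count {W T : Submodule (ZMod 2) V2} (hTW : T ≤ W)
    (hT : finrank (ZMod 2) T + 1 = finrank (ZMod 2) W) :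
    {H : Submodule (ZMod 2) V2 | finrank (ZMod 2) H = 6 ∧ T ≤ H ∧ ¬ W ≤ H}.ncard
      = 2 ^ (7 - finrank (ZMod 2) W) := by
  have hW7 : finrank (ZMod 2) W ≤ 7 := by
    have := Submodule.finrank_le W; rw [finrank_V2] at this; exact this
  have himg : {H : Submodule (ZMod 2) V2 | finrank (ZMod 2) H = 6 ∧ T ≤ H ∧ ¬ W ≤ H}
      = LinearMap.ker '' ((T.dualAnnihilator : Set (Module.Dual (ZMod 2) V2))
        \ (W.dualAnnihilator : Set (Module.Dual (ZMod 2) V2))) := by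
    ext H
    constructor
    · rintro ⟨h6, hTH, hWH⟩
      obtain ⟨f, rfl⟩ := exists_dual h6
      refine ⟨f, ⟨?_, ?_⟩, rfl⟩
      · rw [SetLike.mem_coe, Submodule.mem_dualAnnihilator]
        intro w hw; exact hTH hw
      · rw [SetLike.mem_coe, Submodule.mem_dualAnnihilator]
        push_neg
        by_contra hcon
        push_neg at hcon
        exact hWH fun w hw => hcon w hw
    · rintro ⟨f, ⟨hfT, hfW⟩, rfl⟩
      rw [SetLike.mem_coe, Submodule.mem_dualAnnihilator] at hfT hfW
      have hf : f ≠ 0 := by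
        rintro rfl; exact hfW (fun w _ => rfl)
      push_neg at hfW
      obtain ⟨w, hw, hfw⟩ := hfW
      exact ⟨finrank_ker hf, fun t ht => hfT t ht, fun hle => hfw (hle hw)⟩
  rw [himg, Set.ncard_image_of_injOn]
  · have hsub : (W.dualAnnihilator : Set (Module.Dual (ZMod 2) V2))
        ⊆ (T.dualAnnihilator : Set (Module.Dual (ZMod 2) V2)) :=
      Submodule.dualAnnihilator_anti hTW
    rw [Set.ncard_diff hsub]
    have e1 : (T.dualAnnihilator : Set (Module.Dual (ZMod 2) V2)).ncard
        = 2 ^ finrank (ZMod 2) T.dualAnnihilator := by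
      rw [← Nat.card_coe_set_eq, ← ncard_submodule]; rfl
    have e2 : (W.dualAnnihilator : Set (Module.Dual (ZMod 2) V2)).ncard
        = 2 ^ finrank (ZMod 2) W.dualAnnihilator := by
      rw [← Nat.card_coe_set_eq, ← ncard_submodule]; rfl
    rw [e1, e2]
    have haT := finrank_ann T
    have haW := finrank_ann W
    have h8 : finrank (ZMod 2) T.dualAnnihilator = (7 - finrank (ZMod 2) W) + 1 := by omega
    have h7 : finrank (ZMod 2) W.dualAnnihilator = 7 - finrank (ZMod 2) W := by omega
    rw [h8, h7, pow_succ]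
    omega
  · rintro f ⟨-, hfW⟩ g ⟨-, hgW⟩ hker
    have hf : f ≠ 0 := by
      rintro rfl; exact hfW (Submodule.zero_mem _)
    exact ker_inj hf hker

lemma hole_le_span {S : Set (Submodule (ZMod 2) V2)} {P : Submodule (ZMod 2) V2}
    (hP : IsHole S P) : P ≤ holeSpan S :=
  le_sSup hP

lemma holeCount_inf_span (S : Set (Submodule (ZMod 2) V2)) (X : Submodule (ZMod 2) V2) :
    holeCount S X = holeCount S (X ⊓ holeSpan S) := by
  unfold holeCount
  congr 1
  ext P
  exact ⟨fun ⟨h1, h2⟩ => ⟨h1, le_inf h2 (hole_le_span h1)⟩,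
    fun ⟨h1, h2⟩ => ⟨h1, h2.trans inf_le_left⟩⟩

lemma holeCount_of_span_le {S : Set (Submodule (ZMod 2) V2)} {X : Submodule (ZMod 2) V2}
    (h : holeSpan S ≤ X) : holeCount S X = {P | IsHole S P}.ncard := by
  unfold holeCount
  congr 1
  ext P
  exact ⟨fun hp => hp.1, fun hp => ⟨hp, (hole_le_span hp).trans h⟩⟩

lemma inf_eq_T {W T H : Submodule (ZMod 2) V2} (hTW : T ≤ W)
    (hT : finrank (ZMod 2) T + 1 = finrank (ZMod 2) W)
    (hTH : T ≤ H) (hWH : ¬ W ≤ H) : H ⊓ W = T := by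
  have hle : T ≤ H ⊓ W := le_inf hTH hTW
  have hlt : H ⊓ W < W := lt_of_le_of_ne inf_le_right (fun he => hWH (inf_eq_right.mp he))
  have h1 := Submodule.finrank_lt_finrank_of_lt hlt
  exact (Submodule.eq_of_le_of_finrank_le hle (by omega)).symm

theorem spec_to_holespec (S : Set (Submodule (ZMod 2) V2)) (hS : IsPPS S)
    (hne : {P | IsHole S P}.Nonempty) (j : ℕ) :
    ((j < {P | IsHole S P}.ncard ∧ j ≤ 63 - 3 * S.ncard ∧
        4 ∣ (63 - 3 * S.ncard - j)) →
      2 ^ (7 - finrank (ZMod 2) ↥(holeSpan S)) *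
          {T : Submodule (ZMod 2) V2 | T ≤ holeSpan S ∧
            finrank (ZMod 2) ↥T = finrank (ZMod 2) ↥(holeSpan S) - 1 ∧
            holeCount S T = j}.ncard =
        spec S ((63 - 3 * S.ncard - j) / 4)) ∧
    (¬ (j < {P | IsHole S P}.ncard ∧ j ≤ 63 - 3 * S.ncard ∧
        4 ∣ (63 - 3 * S.ncard - j)) →
      {T : Submodule (ZMod 2) V2 | T ≤ holeSpan S ∧
        finrank (ZMod 2) ↥T = finrank (ZMod 2) ↥(holeSpan S) - 1 ∧
        holeCount S T = j}.ncard = 0) := by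
  classical
  have hfin : S.Finite := Set.toFinite S
  set W := holeSpan S with hWdef
  set n := finrank (ZMod 2) W with hndef
  set k := S.ncard with hkdef
  set NN := {P | IsHole S P}.ncard with hNNdef
  have htotal : NN + 7 * k = 127 := total_eq hS hfin
  have hn1 : 1 ≤ n := by
    obtain ⟨P, hP⟩ := hne
    have hPW : P ≤ W := hole_le_span hP
    have := Submodule.finrank_mono (R := ZMod 2) hPW
    rw [hP.1] at this
    exact this
  have hn7 : n ≤ 7 := by
    have := Submodule.finrank_le W; rw [finrank_V2] at this; exact this
  set Tset := {T : Submodule (ZMod 2) V2 | T ≤ W ∧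
      finrank (ZMod 2) ↥T = n - 1 ∧ holeCount S T = j} with hTsetdef
  -- generic facts about members of Tset
  have hTfacts : ∀ T ∈ Tset, j < NN ∧ j ≤ 63 - 3 * k ∧ 4 ∣ (63 - 3 * k - j) := by
    rintro T ⟨hTW, hTr, hTj⟩
    have hTr' : finrank (ZMod 2) T + 1 = n := by omega
    -- j < NN
    have hjN : j < NN := by
      rw [← hTj]
      unfold holeCount
      apply Set.ncard_lt_ncard _ (Set.toFinite _)
      rw [Set.ssubset_def]
      refine ⟨fun P hP => hP.1, fun hcon => ?_⟩
      have hall : ∀ P ∈ {P | IsHole S P}, P ≤ T := fun P hP => (hcon hP).2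
      have hWT : W ≤ T := sSup_le hall
      have := Submodule.finrank_mono (R := ZMod 2) hWT
      omega
    -- find a hyperplane through T not containing W
    have hcount := fiber_count hTW hTr'
    have hnon : {H : Submodule (ZMod 2) V2 | finrank (ZMod 2) H = 6 ∧ T ≤ H ∧ ¬ W ≤ H}.Nonempty := by
      apply Set.nonempty_of_ncard_ne_zero
      rw [hcount]
      positivity
    obtain ⟨H, h6, hTH, hWH⟩ := hnon
    have hHW : H ⊓ W = T := inf_eq_T hTW hTr' hTH hWH
    have hHj : holeCount S H = j := by
      rw [holeCount_inf_span S H, ← hWdef, hHW, hTj]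
    have heq := hyper_eq hS hfin h6
    rw [hHj] at heq
    omega
  constructor
  · rintro ⟨hjN, hjle, hjdvd⟩
    set i := (63 - 3 * k - j) / 4 with hidef
    have hi4 : 4 * i = 63 - 3 * k - j := by
      rw [hidef, Nat.mul_div_cancel' hjdvd]
    have hji : j + 4 * i + 3 * k = 63 := by omega
    have hhole_iff : ∀ H : Submodule (ZMod 2) V2, finrank (ZMod 2) H = 6 →
        (blocksIn S H = i ↔ holeCount S H = j) := by
      intro H h6
      have := hyper_eq hS hfin h6
      omega
    set A := {H : Submodule (ZMod 2) V2 | finrank (ZMod 2) ↥H = 6 ∧ blocksIn S H = i} with hAdef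
    have hAfin : A.Finite := Set.toFinite A
    have hTfin : Tset.Finite := Set.toFinite Tset
    have hmap : ∀ H ∈ hAfin.toFinset, H ⊓ W ∈ hTfin.toFinset := by
      intro H hH
      rw [Set.Finite.mem_toFinset] at hH ⊢
      obtain ⟨h6, hbi⟩ := hH
      have hHj : holeCount S H = j := (hhole_iff H h6).mp hbi
      have hWH : ¬ W ≤ H := by
        intro hle
        have := holeCount_of_span_le (S := S) (X := H) hle
        rw [hHj] at this
        omega
      have hsup : H ⊔ W = ⊤ := by
        have hlt : H < H ⊔ W := lt_of_le_of_ne le_sup_left (fun he => hWH (sup_eq_left.mp he.symm))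
        have h1 := Submodule.finrank_lt_finrank_of_lt hlt
        have h2 : finrank (ZMod 2) ↥(H ⊔ W) ≤ finrank (ZMod 2) V2 := Submodule.finrank_le _
        rw [finrank_V2] at h2
        apply Submodule.eq_top_of_finrank_eq
        rw [finrank_V2]
        omega
      have hinf : finrank (ZMod 2) ↥(H ⊓ W) = n - 1 := by
        have h1 := Submodule.finrank_sup_add_finrank_inf_eq H W
        rw [hsup, finrank_top, finrank_V2, h6] at h1
        omega
      refine ⟨inf_le_right, hinf, ?_⟩
      rw [hWdef, ← holeCount_inf_span, hHj]
    have hfib : ∀ T ∈ hTfin.toFinset,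
        ((hAfin.toFinset.filter (fun H => H ⊓ W = T)).card) = 2 ^ (7 - n) := by
      intro T hT
      rw [Set.Finite.mem_toFinset] at hT
      obtain ⟨hTW, hTr, hTj⟩ := hT
      have hTr' : finrank (ZMod 2) T + 1 = n := by omega
      have hseteq : ((hAfin.toFinset.filter (fun H => H ⊓ W = T)) : Set (Submodule (ZMod 2) V2))
          = {H : Submodule (ZMod 2) V2 | finrank (ZMod 2) H = 6 ∧ T ≤ H ∧ ¬ W ≤ H} := by
        ext H
        simp only [Finset.coe_filter, Set.Finite.mem_toFinset, Set.mem_setOf_eq, Finset.mem_coe]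
        constructor
        · rintro ⟨⟨h6, hbi⟩, hHT⟩
          refine ⟨h6, hHT ▸ inf_le_left, fun hle => ?_⟩
          have hWW : H ⊓ W = W := inf_eq_right.mpr hle
          rw [hHT] at hWW
          have : finrank (ZMod 2) ↥T = n := by rw [hWW]
          omega
        · rintro ⟨h6, hTH, hWH⟩
          have hHWT : H ⊓ W = T := inf_eq_T hTW hTr' hTH hWH
          have hHj : holeCount S H = j := by
            rw [holeCount_inf_span S H, ← hWdef, hHWT, hTj]
          exact ⟨⟨h6, (hhole_iff H h6).mpr hHj⟩, hHWT⟩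
      have hcn := congrArg Set.ncard hseteq
      rw [Set.ncard_coe_finset] at hcn
      rw [hcn, fiber_count hTW hTr']
    have hcardsum := Finset.card_eq_sum_card_fiberwise hmap
    rw [Finset.sum_congr rfl hfib, Finset.sum_const, smul_eq_mul] at hcardsum
    have e1 : spec S i = hAfin.toFinset.card := by
      rw [spec, ← hAdef]
      exact Set.ncard_eq_toFinset_card _ _
    have e2 : Tset.ncard = hTfin.toFinset.card := Set.ncard_eq_toFinset_card _ _
    rw [e1, e2, hcardsum, mul_comm]
  · intro hnot
    rw [Set.ncard_eq_zero (Set.toFinite _)]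
    rw [Set.eq_empty_iff_forall_notMem]
    intro T hT
    exact hnot (hTfacts T hT)
end

section
/- Let S be a partial plane spread in PG(6,2) of size 17. Then S has exactly 8 holes and they form an affine solid: there exist subspaces E ≤ W of V = F₂⁷ with dim E = 3 and dim W = 4 such that the set of holes of S is exactly the set of points contained in W but not contained in E. In particular the span of the holes has dimension 4. -/
open Module

open Finset

namespace PPSaux

open scoped Classical

set_option maxHeartbeats 1000000

lemma zmod2_cases : ∀ a : ZMod 2, a = 0 ∨ a = 1 := by decide

lemma zmod2_ne (a : ZMod 2) (h : a ≠ 0) : a = 1 := (zmod2_cases a).resolve_left h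

noncomputable def dotf (u : V2) : Module.Dual (ZMod 2) V2 where
  toFun v := ∑ i, u i * v i
  map_add' v w := by simp [mul_add, Finset.sum_add_distrib]
  map_smul' c v := by simp [Finset.mul_sum, mul_left_comm, smul_eq_mul]

lemma dotf_apply (u v : V2) : dotf u v = ∑ i, u i * v i := rfl

noncomputable def dotF : V2 →ₗ[ZMod 2] Module.Dual (ZMod 2) V2 where
  toFun := dotf
  map_add' u v := by
    apply LinearMap.ext; intro w
    simp [dotf_apply, add_mul, Finset.sum_add_distrib]
  map_smul' c u := by
    apply LinearMap.ext; intro w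
    simp [dotf_apply, Finset.mul_sum, mul_assoc, smul_eq_mul]

lemma dotF_apply (u v : V2) : dotF u v = ∑ i, u i * v i := rfl

lemma dotF_symm (u v : V2) : dotF u v = dotF v u := by
  simp only [dotF_apply]
  exact Finset.sum_congr rfl fun i _ => mul_comm _ _

lemma dotF_single (u : V2) (i : Fin 7) : dotF u (Pi.single i 1) = u i := by
  rw [dotF_apply, Finset.sum_eq_single i]
  · simp
  · intro j _ hj; simp [Pi.single_apply, Ne.symm hj]
  · simp

lemma dotF_inj : Function.Injective dotF := by
  intro u v h
  funext i
  have := congrArg (fun f => f (Pi.single i 1)) h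
  simpa [dotF_single] using this

lemma card_filter_mem (X : Submodule (ZMod 2) V2) :
    (Finset.univ.filter (· ∈ X)).card = 2 ^ finrank (ZMod 2) X := by
  rw [← Fintype.card_subtype]
  have h := card_eq_pow_finrank (K := ZMod 2) (V := X)
  simpa [ZMod.card] using h

lemma finrank_of_card (X : Submodule (ZMod 2) V2) (n : ℕ)
    (h : (Finset.univ.filter (· ∈ X)).card = 2 ^ n) : finrank (ZMod 2) X = n := by
  have := card_filter_mem X
  rw [h] at this
  exact (Nat.pow_right_injective (le_refl 2) this.symm)

lemma finrank_V2 : finrank (ZMod 2) V2 = 7 := by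
  simp [Module.finrank_fintype_fun_eq_card]

lemma card_univ_V2 : (Finset.univ : Finset V2).card = 128 := by
  rw [Finset.card_univ]
  rw [show (128 : ℕ) = 2 ^ 7 by norm_num]
  rw [Fintype.card_fun]
  simp [ZMod.card]


lemma range_eq_top_of_ne (f : Module.Dual (ZMod 2) V2) (hf : f ≠ 0) :
    LinearMap.range f = ⊤ := by
  have hex : ∃ x, f x ≠ 0 := by
    by_contra hc
    push_neg at hc
    exact hf (LinearMap.ext fun x => by simp [hc x])
  rcases hex with ⟨x, hx⟩
  have hx1 : f x = 1 := zmod2_ne _ hx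
  rw [Submodule.eq_top_iff']
  intro c
  exact ⟨c • x, by simp [hx1]⟩

lemma finrank_ker_six (f : Module.Dual (ZMod 2) V2) (hf : f ≠ 0) :
    finrank (ZMod 2) (LinearMap.ker f) = 6 := by
  have h := LinearMap.finrank_range_add_finrank_ker f
  rw [range_eq_top_of_ne f hf, finrank_top, finrank_V2] at h
  have : finrank (ZMod 2) (ZMod 2) = 1 := finrank_self _
  omega

lemma functional_eq_of_ker_eq (f g : Module.Dual (ZMod 2) V2) (hf : f ≠ 0)
    (h : LinearMap.ker f = LinearMap.ker g) : f = g := by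
  apply LinearMap.ext; intro x
  rcases zmod2_cases (f x) with h0 | h1
  · have : x ∈ LinearMap.ker g := h ▸ (LinearMap.mem_ker.mpr h0)
    rw [h0, LinearMap.mem_ker.mp this]
  · rw [h1]
    by_contra hne
    have hg0 : g x = 0 := by
      rcases zmod2_cases (g x) with h' | h'
      · exact h'
      · exact absurd h'.symm hne
    have : x ∈ LinearMap.ker f := h.symm ▸ (LinearMap.mem_ker.mpr hg0)
    rw [LinearMap.mem_ker.mp this] at h1
    exact one_ne_zero h1.symm

lemma finrank_ker_inf_five (f g : Module.Dual (ZMod 2) V2) (hf : f ≠ 0) (hg : g ≠ 0)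
    (hfg : f ≠ g) :
    finrank (ZMod 2) ↥(LinearMap.ker f ⊓ LinearMap.ker g) = 5 := by
  set K1 := LinearMap.ker f with hK1
  set K2 := LinearMap.ker g with hK2
  have hker : K1 ≠ K2 := fun h => hfg (functional_eq_of_ker_eq f g hf h)
  have h6f : finrank (ZMod 2) K1 = 6 := finrank_ker_six f hf
  have h6g : finrank (ZMod 2) K2 = 6 := finrank_ker_six g hg
  have hle : finrank (ZMod 2) ↥(K1 ⊔ K2) ≤ 7 := by
    have h := Submodule.finrank_le (K1 ⊔ K2)
    rwa [finrank_V2] at h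
  have hge : 6 ≤ finrank (ZMod 2) ↥(K1 ⊔ K2) := by
    have h := Submodule.finrank_mono (le_sup_left : K1 ≤ K1 ⊔ K2)
    rwa [h6f] at h
  have hsup : finrank (ZMod 2) ↥(K1 ⊔ K2) = 7 := by
    by_contra hne
    have h6 : finrank (ZMod 2) ↥(K1 ⊔ K2) = 6 := by omega
    have e1 : K1 = K1 ⊔ K2 :=
      Submodule.eq_of_le_of_finrank_eq le_sup_left (by omega)
    have e2 : K2 = K1 ⊔ K2 :=
      Submodule.eq_of_le_of_finrank_eq le_sup_right (by omega)
    exact hker (e1.trans e2.symm)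
  have hall := Submodule.finrank_sup_add_finrank_inf_eq K1 K2
  omega

lemma count_ker (f : Module.Dual (ZMod 2) V2) (hf : f ≠ 0) :
    (Finset.univ.filter (fun u => f u = 0)).card = 64 := by
  have : (Finset.univ.filter (fun u => f u = 0)) =
      (Finset.univ.filter (· ∈ LinearMap.ker f)) := by
    apply Finset.filter_congr; intro u _; simp [LinearMap.mem_ker]
  rw [this, card_filter_mem, finrank_ker_six f hf]
  norm_num

lemma count_ker2 (f g : Module.Dual (ZMod 2) V2) (hf : f ≠ 0) (hg : g ≠ 0) (hfg : f ≠ g) :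
    (Finset.univ.filter (fun u => f u = 0 ∧ g u = 0)).card = 32 := by
  have : (Finset.univ.filter (fun u => f u = 0 ∧ g u = 0)) =
      (Finset.univ.filter (· ∈ LinearMap.ker f ⊓ LinearMap.ker g)) := by
    apply Finset.filter_congr; intro u _
    simp [LinearMap.mem_ker, Submodule.mem_inf]
  rw [this, card_filter_mem, finrank_ker_inf_five f g hf hg hfg]
  norm_num


end PPSaux

namespace PPSaux

open scoped Classical

set_option maxHeartbeats 1000000

noncomputable def NS (S : Set (Submodule (ZMod 2) V2)) : Finset V2 :=
  Finset.univ.filter (fun v => v ≠ 0 ∧ ∀ B ∈ S, v ∉ B)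

lemma mem_NS {S : Set (Submodule (ZMod 2) V2)} {v : V2} :
    v ∈ NS S ↔ v ≠ 0 ∧ ∀ B ∈ S, v ∉ B := by simp [NS]

noncomputable def FB (B : Submodule (ZMod 2) V2) : Finset V2 :=
  (Finset.univ.filter (· ∈ B)).erase 0

lemma mem_FB {B : Submodule (ZMod 2) V2} {v : V2} : v ∈ FB B ↔ v ≠ 0 ∧ v ∈ B := by
  simp [FB]

lemma card_FB {S : Set (Submodule (ZMod 2) V2)} (hS : IsPPS S) {B : Submodule (ZMod 2) V2}
    (hB : B ∈ S) : (FB B).card = 7 := by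
  rw [FB, Finset.card_erase_of_mem (by simp [Submodule.zero_mem]), card_filter_mem,
    hS.1 B hB]
  norm_num

lemma card_nonzero : (Finset.univ.filter (fun v : V2 => v ≠ 0)).card = 127 := by
  rw [Finset.filter_ne', Finset.card_erase_of_mem (Finset.mem_univ 0), card_univ_V2]

section WithS

variable {S : Set (Submodule (ZMod 2) V2)} {T : Finset (Submodule (ZMod 2) V2)}

lemma FB_disj (hS : IsPPS S) (hT : ∀ B, B ∈ T ↔ B ∈ S) :
    ∀ B₁ ∈ T, ∀ B₂ ∈ T, B₁ ≠ B₂ → Disjoint (FB B₁) (FB B₂) := by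
  intro B₁ h1 B₂ h2 hne
  rw [Finset.disjoint_left]
  intro v hv1 hv2
  rw [mem_FB] at hv1 hv2
  have : v ∈ B₁ ⊓ B₂ := Submodule.mem_inf.mpr ⟨hv1.2, hv2.2⟩
  rw [hS.2 B₁ ((hT B₁).mp h1) B₂ ((hT B₂).mp h2) hne, Submodule.mem_bot] at this
  exact hv1.1 this

lemma partitionV (hT : ∀ B, B ∈ T ↔ B ∈ S) :
    Finset.univ.filter (fun v : V2 => v ≠ 0) = T.biUnion FB ∪ NS S := by
  ext v
  simp only [Finset.mem_filter, Finset.mem_univ, true_and, Finset.mem_union,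
    Finset.mem_biUnion, mem_FB, mem_NS]
  constructor
  · intro hv
    by_cases hc : ∃ B ∈ S, v ∈ B
    · rcases hc with ⟨B, hB, hvB⟩
      exact Or.inl ⟨B, (hT B).mpr hB, hv, hvB⟩
    · push_neg at hc
      exact Or.inr ⟨hv, hc⟩
  · rintro (⟨B, _, hv, _⟩ | ⟨hv, _⟩) <;> exact hv

lemma disj_biUnion_NS (hT : ∀ B, B ∈ T ↔ B ∈ S) : Disjoint (T.biUnion FB) (NS S) := by
  rw [Finset.disjoint_left]
  intro v hv hvN
  rcases Finset.mem_biUnion.mp hv with ⟨B, hB, hvB⟩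
  exact (mem_NS.mp hvN).2 B ((hT B).mp hB) (mem_FB.mp hvB).2

lemma card_NS (hS : IsPPS S) (hT : ∀ B, B ∈ T ↔ B ∈ S) (hTc : T.card = 17) :
    (NS S).card = 8 := by
  have h1 := partitionV (S := S) hT
  have h2 : (T.biUnion FB).card = 119 := by
    rw [Finset.card_biUnion (FB_disj hS hT)]
    rw [Finset.sum_congr rfl (fun B hB => card_FB hS ((hT B).mp hB))]
    rw [Finset.sum_const, hTc]
    norm_num
  have h3 := card_nonzero
  rw [h1, Finset.card_union_of_disjoint (disj_biUnion_NS hT), h2] at h3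
  omega

lemma isHole_iff (P : Submodule (ZMod 2) V2) :
    IsHole S P ↔ ∃ v ∈ NS S, P = Submodule.span (ZMod 2) {v} := by
  constructor
  · intro hP
    have hPb : P ≠ ⊥ := by
      intro h
      have h1 := hP.1
      rw [h] at h1
      rw [finrank_bot (ZMod 2) V2] at h1
      exact Nat.one_ne_zero h1.symm
    rcases Submodule.ne_bot_iff P |>.mp hPb with ⟨v, hvP, hv0⟩
    have hsp : Submodule.span (ZMod 2) {v} ≤ P :=
      (Submodule.span_singleton_le_iff_mem v P).mpr hvP
    have hPeq : P = Submodule.span (ZMod 2) {v} :=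
      (Submodule.eq_of_le_of_finrank_eq hsp
        (by rw [finrank_span_singleton hv0, hP.1])).symm
    refine ⟨v, mem_NS.mpr ⟨hv0, fun B hB hvB => ?_⟩, hPeq⟩
    exact hP.2 B hB (hPeq ▸ (Submodule.span_singleton_le_iff_mem v B).mpr hvB)
  · rintro ⟨v, hv, rfl⟩
    rcases mem_NS.mp hv with ⟨hv0, hvB⟩
    exact ⟨finrank_span_singleton hv0, fun B hB hle =>
      hvB B hB ((Submodule.span_singleton_le_iff_mem v B).mp hle)⟩

lemma span_injOn :
    Set.InjOn (fun v => Submodule.span (ZMod 2) {v}) ((NS S : Finset V2) : Set V2) := by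
  intro v hv w hw h
  have hv0 : v ≠ 0 := (mem_NS.mp hv).1
  have h' : Submodule.span (ZMod 2) {v} = Submodule.span (ZMod 2) {w} := h
  have : v ∈ Submodule.span (ZMod 2) {w} := by
    rw [← h']; exact Submodule.mem_span_singleton_self v
  rcases Submodule.mem_span_singleton.mp this with ⟨a, ha⟩
  rcases zmod2_cases a with h0 | h1
  · rw [h0, zero_smul] at ha; exact absurd ha.symm hv0
  · rw [h1, one_smul] at ha; exact ha.symm

lemma holes_eq_image :
    {P | IsHole S P} = (fun v => Submodule.span (ZMod 2) {v}) '' ((NS S : Finset V2) : Set V2) := by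
  ext P
  simp only [Set.mem_setOf_eq, Set.mem_image, Finset.mem_coe]
  rw [isHole_iff]
  constructor
  · rintro ⟨v, hv, rfl⟩; exact ⟨v, hv, rfl⟩
  · rintro ⟨v, hv, rfl⟩; exact ⟨v, hv, rfl⟩

lemma ncard_holes (hS : IsPPS S) (hT : ∀ B, B ∈ T ↔ B ∈ S) (hTc : T.card = 17) :
    {P | IsHole S P}.ncard = 8 := by
  rw [holes_eq_image, Set.ncard_image_of_injOn span_injOn, Set.ncard_coe_finset,
    card_NS hS hT hTc]


end WithS

lemma card_FB_gen (X : Submodule (ZMod 2) V2) :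
    (FB X).card = 2 ^ finrank (ZMod 2) X - 1 := by
  rw [FB, Finset.card_erase_of_mem (by simp [Submodule.zero_mem]), card_filter_mem]

lemma FB_inter (B H : Submodule (ZMod 2) V2) : FB B ∩ FB H = FB (B ⊓ H) := by
  ext v
  simp only [Finset.mem_inter, mem_FB, Submodule.mem_inf]
  tauto

lemma dotF_ne_zero {u : V2} (hu : u ≠ 0) : dotF u ≠ 0 := by
  intro h
  exact hu (dotF_inj (h.trans (map_zero dotF).symm))

lemma rank_inf_block {B H : Submodule (ZMod 2) V2} (hB3 : finrank (ZMod 2) B = 3)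
    (hH6 : finrank (ZMod 2) H = 6) :
    (B ≤ H ∧ finrank (ZMod 2) ↥(B ⊓ H) = 3) ∨
      (¬ B ≤ H ∧ finrank (ZMod 2) ↥(B ⊓ H) = 2) := by
  by_cases hle : B ≤ H
  · left
    refine ⟨hle, ?_⟩
    rw [inf_eq_left.mpr hle, hB3]
  · right
    refine ⟨hle, ?_⟩
    have hle3 : finrank (ZMod 2) ↥(B ⊓ H) ≤ 3 := by
      have h := Submodule.finrank_mono (inf_le_left : B ⊓ H ≤ B)
      omega
    have hsup7 : finrank (ZMod 2) ↥(B ⊔ H) ≤ 7 := by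
      have h := Submodule.finrank_le (B ⊔ H)
      rwa [finrank_V2] at h
    have hsum := Submodule.finrank_sup_add_finrank_inf_eq B H
    have hne3 : finrank (ZMod 2) ↥(B ⊓ H) ≠ 3 := by
      intro h3
      have : B ⊓ H = B :=
        Submodule.eq_of_le_of_finrank_eq inf_le_left (by omega)
      exact hle (inf_eq_left.mp this)
    omega

section WithS2

variable {S : Set (Submodule (ZMod 2) V2)} {T : Finset (Submodule (ZMod 2) V2)}

noncomputable def hc (S : Set (Submodule (ZMod 2) V2)) (u : V2) : ℕ :=
  ((NS S).filter (fun v => dotF v u = 0)).card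

lemma hc_le_8 (hS : IsPPS S) (hT : ∀ B, B ∈ T ↔ B ∈ S) (hTc : T.card = 17) (u : V2) :
    hc S u ≤ 8 := by
  rw [← card_NS hS hT hTc]
  exact Finset.card_filter_le _ _

lemma hc_values (hS : IsPPS S) (hT : ∀ B, B ∈ T ↔ B ∈ S) (hTc : T.card = 17)
    {u : V2} (hu : u ≠ 0) : hc S u = 0 ∨ hc S u = 4 ∨ hc S u = 8 := by
  set H := LinearMap.ker (dotF u) with hH
  have hH6 : finrank (ZMod 2) H = 6 := finrank_ker_six _ (dotF_ne_zero hu)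
  -- card of FB H
  have hcardH : (FB H).card = 63 := by rw [card_FB_gen, hH6]; norm_num
  -- partition of FB H
  have hsub : FB H ⊆ Finset.univ.filter (fun v : V2 => v ≠ 0) := by
    intro v hv
    simp only [Finset.mem_filter, Finset.mem_univ, true_and]
    exact (mem_FB.mp hv).1
  have hpart : FB H = (T.biUnion FB ∩ FB H) ∪ ((NS S) ∩ FB H) := by
    conv_lhs => rw [← Finset.inter_eq_right.mpr hsub]
    rw [partitionV hT, Finset.union_inter_distrib_right]
  have hdisj : Disjoint (T.biUnion FB ∩ FB H) ((NS S) ∩ FB H) :=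
    Disjoint.mono inf_le_left inf_le_left (disj_biUnion_NS hT)
  have hcard1 : (T.biUnion FB ∩ FB H).card
      = ∑ B ∈ T, (if B ≤ H then 7 else 3) := by
    have hdd : ∀ B₁ ∈ T, ∀ B₂ ∈ T, B₁ ≠ B₂ →
        Disjoint (FB B₁ ∩ FB H) (FB B₂ ∩ FB H) := fun B₁ h1 B₂ h2 hne =>
      Disjoint.mono inf_le_left inf_le_left (FB_disj hS hT B₁ h1 B₂ h2 hne)
    rw [Finset.biUnion_inter, Finset.card_biUnion hdd]
    apply Finset.sum_congr rfl
    intro B hB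
    rw [FB_inter, card_FB_gen]
    rcases rank_inf_block (hS.1 B ((hT B).mp hB)) hH6 with ⟨hle, hr⟩ | ⟨hle, hr⟩
    · rw [hr, if_pos hle]
      norm_num
    · rw [hr, if_neg hle]
      norm_num
  have hcard2 : ((NS S) ∩ FB H).card = hc S u := by
    congr 1
    ext v
    simp only [Finset.mem_inter, mem_FB, hc, Finset.mem_filter, hH, LinearMap.mem_ker]
    constructor
    · rintro ⟨hvN, _, hvH⟩
      exact ⟨hvN, by rw [dotF_symm]; exact hvH⟩
    · rintro ⟨hvN, hd⟩
      exact ⟨hvN, (mem_NS.mp hvN).1, by rw [dotF_symm]; exact hd⟩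
  -- sum over ite
  set b := (T.filter (· ≤ H)).card with hb
  have hble : b ≤ 17 := hTc ▸ Finset.card_filter_le _ _
  have hsum : ∑ B ∈ T, (if B ≤ H then 7 else 3) = 7 * b + 3 * (17 - b) := by
    rw [Finset.sum_ite, Finset.sum_const, Finset.sum_const, smul_eq_mul, smul_eq_mul]
    have : (T.filter (fun B => ¬ B ≤ H)).card = 17 - b := by
      have := Finset.card_filter_add_card_filter_not (s := T) (p := (· ≤ H))
      omega
    rw [this]
    ring
  have hfinal : 63 = 7 * b + 3 * (17 - b) + hc S u := by
    rw [← hcardH, hpart, Finset.card_union_of_disjoint hdisj, hcard1, hcard2, hsum]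
  have h8 := hc_le_8 hS hT hTc u
  omega

end WithS2

noncomputable def UF : Finset V2 := Finset.univ.filter (fun u : V2 => u ≠ 0)

lemma card_UF : UF.card = 127 := card_nonzero

lemma count_u_single {v : V2} (hv : v ≠ 0) :
    (UF.filter (fun u => dotF v u = 0)).card = 63 := by
  have he : UF.filter (fun u => dotF v u = 0)
      = (Finset.univ.filter (fun u => dotF v u = 0)).erase 0 := by
    ext u
    simp only [UF, Finset.mem_filter, Finset.mem_univ, true_and, Finset.mem_erase]
    try tauto
  rw [he, Finset.card_erase_of_mem (by simp), count_ker _ (dotF_ne_zero hv)]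

lemma count_u_pair {v w : V2} (hv : v ≠ 0) (hw : w ≠ 0) (hvw : v ≠ w) :
    (UF.filter (fun u => dotF v u = 0 ∧ dotF w u = 0)).card = 31 := by
  have he : UF.filter (fun u => dotF v u = 0 ∧ dotF w u = 0)
      = (Finset.univ.filter (fun u => dotF v u = 0 ∧ dotF w u = 0)).erase 0 := by
    ext u
    simp only [UF, Finset.mem_filter, Finset.mem_univ, true_and, Finset.mem_erase]
    try tauto
  rw [he, Finset.card_erase_of_mem (by simp),
    count_ker2 _ _ (dotF_ne_zero hv) (dotF_ne_zero hw) (fun h => hvw (dotF_inj h))]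

section WithS3

variable {S : Set (Submodule (ZMod 2) V2)} {T : Finset (Submodule (ZMod 2) V2)}

lemma sum_hc (hS : IsPPS S) (hT : ∀ B, B ∈ T ↔ B ∈ S) (hTc : T.card = 17) :
    ∑ u ∈ UF, hc S u = 504 := by
  have h1 : ∀ u, hc S u = ∑ v ∈ NS S, (if dotF v u = 0 then 1 else 0) := fun u =>
    Finset.card_filter _ _
  rw [Finset.sum_congr rfl (fun u _ => h1 u), Finset.sum_comm]
  have h2 : ∀ v ∈ NS S, ∑ u ∈ UF, (if dotF v u = 0 then 1 else 0) = 63 := by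
    intro v hv
    rw [← Finset.card_filter]
    exact count_u_single (mem_NS.mp hv).1
  rw [Finset.sum_congr rfl h2, Finset.sum_const, card_NS hS hT hTc]
  norm_num

lemma sum_hc_sq (hS : IsPPS S) (hT : ∀ B, B ∈ T ↔ B ∈ S) (hTc : T.card = 17) :
    ∑ u ∈ UF, (hc S u) ^ 2 = 2240 := by
  have h1 : ∀ u, (hc S u) ^ 2 = ∑ v ∈ NS S, ∑ w ∈ NS S,
      (if dotF v u = 0 ∧ dotF w u = 0 then 1 else 0) := by
    intro u
    rw [hc, Finset.card_filter, pow_two, Finset.sum_mul_sum]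
    apply Finset.sum_congr rfl; intro v _
    apply Finset.sum_congr rfl; intro w _
    split_ifs with h1' h2' h3' <;> simp_all
  rw [Finset.sum_congr rfl (fun u _ => h1 u), Finset.sum_comm]
  have h2 : ∀ v ∈ NS S, ∑ w ∈ NS S, ∑ u ∈ UF,
      (if dotF v u = 0 ∧ dotF w u = 0 then (1:ℕ) else 0) = 280 := by
    intro v hv
    have hswap : ∀ w ∈ NS S, ∑ u ∈ UF, (if dotF v u = 0 ∧ dotF w u = 0 then (1:ℕ) else 0)
        = 31 + (if v = w then 32 else 0) := by
      intro w hw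
      rw [← Finset.card_filter]
      by_cases hvw : v = w
      · subst hvw
        rw [if_pos rfl]
        have : UF.filter (fun u => dotF v u = 0 ∧ dotF v u = 0)
            = UF.filter (fun u => dotF v u = 0) := by
          apply Finset.filter_congr; intro u _; tauto
        rw [this, count_u_single (mem_NS.mp hv).1]
      · rw [if_neg hvw, count_u_pair (mem_NS.mp hv).1 (mem_NS.mp hw).1 hvw]
    rw [Finset.sum_congr rfl hswap, Finset.sum_add_distrib, Finset.sum_const,
      card_NS hS hT hTc, Finset.sum_ite_eq (NS S) v (fun _ => 32), if_pos hv]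
    norm_num
  have hcomm : ∀ v ∈ NS S, (∑ u ∈ UF, ∑ w ∈ NS S,
      (if dotF v u = 0 ∧ dotF w u = 0 then (1:ℕ) else 0))
      = ∑ w ∈ NS S, ∑ u ∈ UF, (if dotF v u = 0 ∧ dotF w u = 0 then (1:ℕ) else 0) :=
    fun v _ => Finset.sum_comm
  rw [Finset.sum_congr rfl hcomm, Finset.sum_congr rfl h2, Finset.sum_const,
    card_NS hS hT hTc]
  norm_num

lemma mem_UF {u : V2} : u ∈ UF ↔ u ≠ 0 := by simp [UF]

lemma count_a (hS : IsPPS S) (hT : ∀ B, B ∈ T ↔ B ∈ S) (hTc : T.card = 17) :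
    (UF.filter (fun u => hc S u = 0)).card = 8 := by
  have key : ∀ u ∈ UF, ((hc S u : ℤ) - 4) * ((hc S u : ℤ) - 8)
      = (if hc S u = 0 then 32 else 0) := by
    intro u hu
    rcases hc_values hS hT hTc (mem_UF.mp hu) with h | h | h <;> rw [h] <;> norm_num
  have lhs : ∑ u ∈ UF, ((hc S u : ℤ) - 4) * ((hc S u : ℤ) - 8)
      = 32 * ((UF.filter (fun u => hc S u = 0)).card : ℤ) := by
    rw [Finset.sum_congr rfl key, ← Finset.sum_filter, Finset.sum_const, nsmul_eq_mul]
    ring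
  have e2 : ∑ u ∈ UF, ((hc S u : ℤ))^2 = 2240 := by exact_mod_cast sum_hc_sq hS hT hTc
  have e1 : ∑ u ∈ UF, (hc S u : ℤ) = 504 := by exact_mod_cast sum_hc hS hT hTc
  have expand : ∑ u ∈ UF, (((hc S u : ℤ) - 4) * ((hc S u : ℤ) - 8))
      = ∑ u ∈ UF, ((hc S u : ℤ)^2 - 12 * (hc S u : ℤ) + 32) :=
    Finset.sum_congr rfl (fun u _ => by ring)
  rw [Finset.sum_add_distrib, Finset.sum_sub_distrib, ← Finset.mul_sum,
    Finset.sum_const, card_UF, e1, e2, lhs] at expand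
  norm_num [nsmul_eq_mul] at expand
  omega

lemma count_z (hS : IsPPS S) (hT : ∀ B, B ∈ T ↔ B ∈ S) (hTc : T.card = 17) :
    (UF.filter (fun u => hc S u = 8)).card = 7 := by
  have key : ∀ u ∈ UF, ((hc S u : ℤ)) * ((hc S u : ℤ) - 4)
      = (if hc S u = 8 then 32 else 0) := by
    intro u hu
    rcases hc_values hS hT hTc (mem_UF.mp hu) with h | h | h <;> rw [h] <;> norm_num
  have lhs : ∑ u ∈ UF, ((hc S u : ℤ)) * ((hc S u : ℤ) - 4)
      = 32 * ((UF.filter (fun u => hc S u = 8)).card : ℤ) := by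
    rw [Finset.sum_congr rfl key, ← Finset.sum_filter, Finset.sum_const, nsmul_eq_mul]
    ring
  have e2 : ∑ u ∈ UF, ((hc S u : ℤ))^2 = 2240 := by exact_mod_cast sum_hc_sq hS hT hTc
  have e1 : ∑ u ∈ UF, (hc S u : ℤ) = 504 := by exact_mod_cast sum_hc hS hT hTc
  have expand : ∑ u ∈ UF, (((hc S u : ℤ)) * ((hc S u : ℤ) - 4))
      = ∑ u ∈ UF, ((hc S u : ℤ)^2 - 4 * (hc S u : ℤ)) :=
    Finset.sum_congr rfl (fun u _ => by ring)
  rw [Finset.sum_sub_distrib, ← Finset.mul_sum, e1, e2, lhs] at expand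
  omega

end WithS3

lemma zmod2_add_self : ∀ a : ZMod 2, a + a = 0 := by decide

lemma exists_span_of_rank_one {P : Submodule (ZMod 2) V2} (h1 : finrank (ZMod 2) P = 1) :
    ∃ v : V2, v ≠ 0 ∧ P = Submodule.span (ZMod 2) {v} := by
  have hPb : P ≠ ⊥ := by
    intro h
    have h' := h1
    rw [h] at h'
    rw [finrank_bot (ZMod 2) V2] at h'
    exact Nat.one_ne_zero h'.symm
  rcases (Submodule.ne_bot_iff P).mp hPb with ⟨v, hvP, hv0⟩
  refine ⟨v, hv0, ?_⟩
  exact (Submodule.eq_of_le_of_finrank_eq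
    ((Submodule.span_singleton_le_iff_mem v P).mpr hvP)
    (by rw [finrank_span_singleton hv0, h1])).symm

section WithS4

variable {S : Set (Submodule (ZMod 2) V2)} {T : Finset (Submodule (ZMod 2) V2)}

noncomputable def WS (S : Set (Submodule (ZMod 2) V2)) : Submodule (ZMod 2) V2 :=
  Submodule.span (ZMod 2) ((NS S : Finset V2) : Set V2)

lemma NS_subset_WS {v : V2} (hv : v ∈ NS S) : v ∈ WS S :=
  Submodule.subset_span (by exact_mod_cast hv)

noncomputable def PhiS (S : Set (Submodule (ZMod 2) V2)) :
    V2 →ₗ[ZMod 2] Module.Dual (ZMod 2) (WS S) :=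
  ((WS S).subtype.dualMap).comp dotF

lemma mem_ker_PhiS {u : V2} :
    u ∈ LinearMap.ker (PhiS S) ↔ ∀ v ∈ NS S, dotF u v = 0 := by
  rw [LinearMap.mem_ker]
  constructor
  · intro h v hv
    have := congrArg (fun g => g ⟨v, NS_subset_WS hv⟩) h
    simpa [PhiS] using this
  · intro h
    apply LinearMap.ext
    rintro ⟨x, hx⟩
    have hsub : ((NS S : Finset V2) : Set V2) ⊆ (LinearMap.ker (dotF u) : Set V2) := by
      intro v hv
      exact LinearMap.mem_ker.mpr (h v (by exact_mod_cast hv))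
    have hWk : WS S ≤ LinearMap.ker (dotF u) := Submodule.span_le.mpr hsub
    have : dotF u x = 0 := LinearMap.mem_ker.mp (hWk hx)
    simpa [PhiS] using this

lemma card_ker_PhiS (hS : IsPPS S) (hT : ∀ B, B ∈ T ↔ B ∈ S) (hTc : T.card = 17) :
    (Finset.univ.filter (· ∈ LinearMap.ker (PhiS S))).card = 8 := by
  have heq : Finset.univ.filter (· ∈ LinearMap.ker (PhiS S))
      = insert (0 : V2) (UF.filter (fun u => hc S u = 8)) := by
    ext u
    simp only [Finset.mem_filter, Finset.mem_univ, true_and, Finset.mem_insert, mem_UF]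
    constructor
    · intro hu
      by_cases h0 : u = 0
      · exact Or.inl h0
      · right
        refine ⟨h0, ?_⟩
        have hall := mem_ker_PhiS.mp hu
        have : (NS S).filter (fun v => dotF v u = 0) = NS S := by
          apply Finset.filter_true_of_mem
          intro v hv
          rw [dotF_symm]
          exact hall v hv
        rw [hc, this, card_NS hS hT hTc]
    · rintro (rfl | ⟨hu0, hu8⟩)
      · exact Submodule.zero_mem _
      · apply mem_ker_PhiS.mpr
        have hsub : (NS S).filter (fun v => dotF v u = 0) ⊆ NS S := Finset.filter_subset _ _
        have hcard : (NS S).card ≤ ((NS S).filter (fun v => dotF v u = 0)).card := by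
          rw [card_NS hS hT hTc]
          exact hu8.ge
        have hNeq := (Finset.eq_of_subset_of_card_le hsub hcard).symm
        intro v hv
        rw [dotF_symm]
        rw [hNeq] at hv
        exact (Finset.mem_filter.mp hv).2
  rw [heq, Finset.card_insert_of_notMem (by simp [mem_UF]), count_z hS hT hTc]

lemma finrank_WS (hS : IsPPS S) (hT : ∀ B, B ∈ T ↔ B ∈ S) (hTc : T.card = 17) :
    finrank (ZMod 2) (WS S) = 4 := by
  have hker : finrank (ZMod 2) (LinearMap.ker (PhiS S)) = 3 :=
    finrank_of_card _ 3 (by rw [card_ker_PhiS hS hT hTc]; norm_num)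
  have hsurj : Function.Surjective (PhiS S) := by
    have h1 : Function.Surjective ((WS S).subtype.dualMap) :=
      LinearMap.dualMap_surjective_of_injective (Submodule.injective_subtype (WS S))
    have h2 : Function.Surjective dotF := by
      have hdim : finrank (ZMod 2) V2 = finrank (ZMod 2) (Module.Dual (ZMod 2) V2) :=
        (Subspace.dual_finrank_eq).symm
      exact (LinearMap.injective_iff_surjective_of_finrank_eq_finrank hdim).mp dotF_inj
    rw [PhiS, LinearMap.coe_comp]
    exact h1.comp h2
  have hrn := LinearMap.finrank_range_add_finrank_ker (PhiS S)
  rw [LinearMap.range_eq_top.mpr hsurj, finrank_top, Subspace.dual_finrank_eq,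
    finrank_V2, hker] at hrn
  omega

lemma exists_u0 (hS : IsPPS S) (hT : ∀ B, B ∈ T ↔ B ∈ S) (hTc : T.card = 17) :
    ∃ u₀ : V2, u₀ ≠ 0 ∧ ∀ v ∈ NS S, dotF u₀ v = 1 := by
  have hpos : 0 < (UF.filter (fun u => hc S u = 0)).card := by
    rw [count_a hS hT hTc]; norm_num
  rcases Finset.card_pos.mp hpos with ⟨u₀, hu₀⟩
  rcases Finset.mem_filter.mp hu₀ with ⟨huU, hc0⟩
  refine ⟨u₀, mem_UF.mp huU, fun v hv => ?_⟩
  have hempty : (NS S).filter (fun v => dotF v u₀ = 0) = ∅ := Finset.card_eq_zero.mp hc0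
  have hne : dotF v u₀ ≠ 0 := by
    intro h0
    have : v ∈ (NS S).filter (fun v => dotF v u₀ = 0) := Finset.mem_filter.mpr ⟨hv, h0⟩
    rw [hempty] at this
    exact absurd this (Finset.notMem_empty v)
  rw [dotF_symm]
  exact zmod2_ne _ hne

end WithS4

section WithS5

variable {S : Set (Submodule (ZMod 2) V2)} {T : Finset (Submodule (ZMod 2) V2)}

lemma E_counts (hS : IsPPS S) (hT : ∀ B, B ∈ T ↔ B ∈ S) (hTc : T.card = 17)
    {u₀ : V2} (hall : ∀ v ∈ NS S, dotF u₀ v = 1) :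
    (Finset.univ.filter (· ∈ WS S ⊓ LinearMap.ker (dotF u₀))).card = 8 ∧
    NS S = (Finset.univ.filter (· ∈ WS S)).filter (fun x => dotF u₀ x = 1) := by
  obtain ⟨v₀, hv₀⟩ := Finset.card_pos.mp
    (by rw [card_NS hS hT hTc]; norm_num : 0 < (NS S).card)
  have hv₀W : v₀ ∈ WS S := NS_subset_WS hv₀
  have hv₀d : dotF u₀ v₀ = 1 := hall v₀ hv₀
  set WF := Finset.univ.filter (· ∈ WS S) with hWFdef
  have hWF : WF.card = 16 := by
    rw [hWFdef, card_filter_mem, finrank_WS hS hT hTc]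
    norm_num
  have hvv₀ : v₀ + v₀ = 0 := funext fun i => zmod2_add_self _
  have hbij : (WF.filter (fun x => dotF u₀ x = 0)).card
      = (WF.filter (fun x => dotF u₀ x = 1)).card := by
    apply Finset.card_bij (fun x _ => x + v₀)
    · intro x hx
      rcases Finset.mem_filter.mp hx with ⟨hxW, hx0⟩
      rcases Finset.mem_filter.mp hxW with ⟨_, hxW'⟩
      refine Finset.mem_filter.mpr ⟨Finset.mem_filter.mpr
        ⟨Finset.mem_univ _, (WS S).add_mem hxW' hv₀W⟩, ?_⟩
      rw [map_add, hx0, hv₀d, zero_add]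
    · intro a ha b hb h
      exact add_right_cancel h
    · intro y hy
      rcases Finset.mem_filter.mp hy with ⟨hyW, hy1⟩
      rcases Finset.mem_filter.mp hyW with ⟨_, hyW'⟩
      refine ⟨y + v₀, Finset.mem_filter.mpr ⟨Finset.mem_filter.mpr
        ⟨Finset.mem_univ _, (WS S).add_mem hyW' hv₀W⟩, ?_⟩, ?_⟩
      · rw [map_add, hy1, hv₀d]
        decide
      · rw [add_assoc, hvv₀, add_zero]
  have hsplit := Finset.card_filter_add_card_filter_not
    (s := WF) (p := fun x => dotF u₀ x = 0)
  have hneg : WF.filter (fun x => ¬ dotF u₀ x = 0) = WF.filter (fun x => dotF u₀ x = 1) := by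
    apply Finset.filter_congr
    intro x _
    constructor
    · intro h; exact zmod2_ne _ h
    · intro h; rw [h]; exact one_ne_zero
  rw [hneg, hWF] at hsplit
  have hcard0 : (WF.filter (fun x => dotF u₀ x = 0)).card = 8 := by omega
  have hcard1 : (WF.filter (fun x => dotF u₀ x = 1)).card = 8 := by omega
  constructor
  · have : Finset.univ.filter (· ∈ WS S ⊓ LinearMap.ker (dotF u₀))
        = WF.filter (fun x => dotF u₀ x = 0) := by
      ext x
      simp only [hWFdef, Finset.mem_filter, Finset.mem_univ, true_and,
        Submodule.mem_inf, LinearMap.mem_ker]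
    rw [this, hcard0]
  · apply Finset.eq_of_subset_of_card_le
    · intro v hv
      exact Finset.mem_filter.mpr ⟨Finset.mem_filter.mpr
        ⟨Finset.mem_univ _, NS_subset_WS hv⟩, hall v hv⟩
    · rw [hcard1, card_NS hS hT hTc]

end WithS5

end PPSaux

open PPSaux

theorem holes_of_max_pps_affine_solid (S : Set (Submodule (ZMod 2) V2)) (hS : IsPPS S)
    (h17 : S.ncard = 17) :
    {P | IsHole S P}.ncard = 8 ∧
    (∃ E W : Submodule (ZMod 2) V2, E ≤ W ∧ finrank (ZMod 2) ↥E = 3 ∧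
      finrank (ZMod 2) ↥W = 4 ∧
      {P | IsHole S P} =
        {P : Submodule (ZMod 2) V2 | finrank (ZMod 2) ↥P = 1 ∧ P ≤ W ∧ ¬ P ≤ E}) ∧
    finrank (ZMod 2) ↥(holeSpan S) = 4 := by
  classical
  have hfin : S.Finite := Set.finite_of_ncard_ne_zero (by rw [h17]; norm_num)
  have hT : ∀ B, B ∈ hfin.toFinset ↔ B ∈ S := fun B => Set.Finite.mem_toFinset hfin
  have hTc : hfin.toFinset.card = 17 := by
    rw [← Set.ncard_eq_toFinset_card S hfin, h17]
  obtain ⟨u₀, hu₀, hall⟩ := exists_u0 hS hT hTc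
  obtain ⟨hcardE, hNSeq⟩ := E_counts hS hT hTc hall
  set W := WS S with hWdef
  set E := W ⊓ LinearMap.ker (dotF u₀) with hEdef
  have hWrank : finrank (ZMod 2) W = 4 := finrank_WS hS hT hTc
  have hErank : finrank (ZMod 2) E = 3 :=
    finrank_of_card _ 3 (by rw [hEdef, hWdef]; rw [hcardE]; norm_num)
  have hHoles : {P | IsHole S P} =
      {P : Submodule (ZMod 2) V2 | finrank (ZMod 2) ↥P = 1 ∧ P ≤ W ∧ ¬ P ≤ E} := by
    ext P
    simp only [Set.mem_setOf_eq]
    rw [isHole_iff]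
    constructor
    · rintro ⟨v, hv, rfl⟩
      have hv0 : v ≠ 0 := (mem_NS.mp hv).1
      refine ⟨finrank_span_singleton hv0,
        (Submodule.span_singleton_le_iff_mem v W).mpr (NS_subset_WS hv), ?_⟩
      intro hle
      have hvE : v ∈ E := hle (Submodule.mem_span_singleton_self v)
      have h0 : dotF u₀ v = 0 := LinearMap.mem_ker.mp (Submodule.mem_inf.mp hvE).2
      rw [hall v hv] at h0
      exact one_ne_zero h0
    · rintro ⟨h1, hPW, hPE⟩
      obtain ⟨v, hv0, rfl⟩ := exists_span_of_rank_one h1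
      have hvW : v ∈ W := hPW (Submodule.mem_span_singleton_self v)
      have hvE : v ∉ E := fun h => hPE ((Submodule.span_singleton_le_iff_mem v E).mpr h)
      have hd1 : dotF u₀ v = 1 := by
        apply zmod2_ne
        intro h0
        exact hvE (Submodule.mem_inf.mpr ⟨hvW, LinearMap.mem_ker.mpr h0⟩)
      have hvNS : v ∈ NS S := by
        rw [hNSeq]
        exact Finset.mem_filter.mpr
          ⟨Finset.mem_filter.mpr ⟨Finset.mem_univ _, hvW⟩, hd1⟩
      exact ⟨v, hvNS, rfl⟩
  have hSpan : holeSpan S = W := by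
    apply le_antisymm
    · apply sSup_le
      intro P hP
      rcases (isHole_iff P).mp hP with ⟨v, hv, rfl⟩
      exact (Submodule.span_singleton_le_iff_mem v W).mpr (NS_subset_WS hv)
    · rw [hWdef, WS]
      apply Submodule.span_le.mpr
      intro v hv
      have hvNS : v ∈ NS S := by exact_mod_cast hv
      have hole : Submodule.span (ZMod 2) {v} ∈ {P | IsHole S P} :=
        (isHole_iff _).mpr ⟨v, hvNS, rfl⟩
      exact (le_sSup hole) (Submodule.mem_span_singleton_self v)
  exact ⟨ncard_holes hS hT hTc, ⟨E, W, inf_le_left, hErank, hWrank, hHoles⟩,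
    by rw [hSpan]; exact hWrank⟩
end

section
/- Let S be a partial plane spread in PG(6,2) of size 16 whose hole span ⟨N⟩ has dimension 6. Then the hole set N is the disjoint union of a plane and an affine solid: there exist a 3-dimensional subspace E, a 4-dimensional subspace W and a 3-dimensional subspace E' ≤ W of V = F₂⁷ such that dim(E ∩ W) = 1, every point of E is a hole, every point of W not contained in E' is a hole, and N consists exactly of the 7 points of E together with the 8 points of W not contained in E' (these two point sets being disjoint). -/
open Module

/-!
A block meets a hyperplane in `3` or `7` points, so the `16` disjoint blocks cover a multiple of
`4` of the `63` points of any hyperplane: the `15` holes meet every hyperplane in `3` mod `4`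
points. Inside `⟨N⟩ ≅ 𝔽₂⁶` (the only hyperplane counts are then `3, 7, 11`), the first two moments
`∑ c` and `∑ c²` of these counts leave exactly three functionals `γ₁, γ₂, γ₃` with count `3`.
Counting the holes on the kernels of the seven nonzero combinations of the `γᵢ` shows that the
solid `E' = ker γ₁ ∩ ker γ₂ ∩ ker γ₃` contains exactly one hole and that the `8` holes off
`ker (γ₁ + γ₂ + γ₃)` are the coset `{γ₁ = γ₂ = γ₃ = 1}`, i.e. `W \ E'` for a solid `W ⊇ E'`.
An affine solid meets every hyperplane in `0`, `4` or `8` points, so the other `7` holes meet every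
hyperplane in `3` or `7` points, and the first moment forces them to span a plane.
-/

open Finset Submodule

theorem ZMod.eq_one_of_ne_zero_two {x : ZMod 2} (hx : x ≠ 0) : x = 1 := by
  revert x; decide

theorem ZModModule.eq_of_add_eq_zero {G : Type*} [AddCommGroup G] [Module (ZMod 2) G] {x y : G}
    (h : x + y = 0) : x = y :=
  (add_eq_zero_iff_eq_neg.1 h).trans (ZModModule.neg_eq_self y)

theorem exists_eq_span_singleton_of_finrank_eq_one {K V : Type*} [DivisionRing K]
    [AddCommGroup V] [Module K V] {P : Submodule K V} (hP : finrank K P = 1) :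
    ∃ v ≠ 0, P = span K {v} := by
  obtain ⟨v, hv, hv0⟩ := exists_mem_ne_zero_of_ne_bot fun (h : P = ⊥) => by
    rw [h, finrank_bot] at hP
    exact zero_ne_one hP
  exact ⟨v, hv0, eq_span_singleton_of_mem_of_finrank_eq_one hP hv hv0⟩

section Counting

variable {V : Type*} [AddCommGroup V] [Module (ZMod 2) V]

/-- Over `𝔽₂` points are nonzero vectors and hyperplanes are kernels of nonzero functionals, so for
`0 ∉ s` and `φ ≠ 0` this is the number of points of `s` on the hyperplane `ker φ`. -/
def kerCard (s : Finset V) (φ : Dual (ZMod 2) V) : ℕ := #{v ∈ s | φ v = 0}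

theorem kerCard_add_kerCard_add_kerCard_add (s : Finset V) (α β : Dual (ZMod 2) V) :
    kerCard s α + kerCard s β + kerCard s (α + β) = #s + 2 * #{v ∈ s | α v = 0 ∧ β v = 0} := by
  simp only [kerCard, card_filter, LinearMap.add_apply]
  rw [card_eq_sum_ones s, mul_sum, ← sum_add_distrib, ← sum_add_distrib, ← sum_add_distrib]
  refine sum_congr rfl fun v _ => ?_
  generalize α v = x; generalize β v = y
  -- unless `x = y = 0`, exactly one of `x`, `y`, `x + y` vanishes
  revert x y; decide

theorem kerCard_sum_seven (s : Finset V) (α β γ : Dual (ZMod 2) V) :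
    kerCard s α + kerCard s β + kerCard s γ + kerCard s (α + β) + kerCard s (α + γ) +
        kerCard s (β + γ) + kerCard s (α + β + γ) =
      3 * #s + 4 * #{v ∈ s | α v = 0 ∧ β v = 0 ∧ γ v = 0} := by
  simp only [kerCard, card_filter, LinearMap.add_apply]
  rw [card_eq_sum_ones s, mul_sum, mul_sum]
  simp only [← sum_add_distrib]
  refine sum_congr rfl fun v _ => ?_
  generalize α v = x; generalize β v = y; generalize γ v = z
  -- unless `x = y = z = 0`, exactly three of the seven nonzero combinations vanish
  revert x y z; decide

theorem two_mul_kerCard_of_add_mem {s : Finset V} {φ : Dual (ZMod 2) V} {v₀ : V}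
    (hs : ∀ v ∈ s, v + v₀ ∈ s) (hφ : φ v₀ ≠ 0) : 2 * kerCard s φ = #s := by
  have h1 := ZMod.eq_one_of_ne_zero_two hφ
  have hswap : #{v ∈ s | ¬φ v = 0} = kerCard s φ := by
    refine card_nbij' (· + v₀) (· + v₀) ?_ ?_ ?_ ?_ <;> intro v hv <;>
      simp only [coe_filter, Set.mem_ofPred_eq] at hv ⊢
    · rw [map_add, h1, ZMod.eq_one_of_ne_zero_two hv.2]
      exact ⟨hs v hv.1, rfl⟩
    · rw [map_add, h1, hv.2]
      exact ⟨hs v hv.1, one_ne_zero⟩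
    all_goals rw [add_assoc, ZModModule.add_self, add_zero]
  rw [← card_filter_add_card_filter_not (s := s) (fun v => φ v = 0), hswap, kerCard]
  ring

theorem two_mul_kerCard_univ [Fintype V] {φ : Dual (ZMod 2) V} (hφ : φ ≠ 0) :
    2 * kerCard univ φ = Fintype.card V := by
  obtain ⟨v₀, hv₀⟩ : ∃ v₀, φ v₀ ≠ 0 := by
    by_contra! h
    exact hφ (LinearMap.ext h)
  exact two_mul_kerCard_of_add_mem (fun _ _ => mem_univ _) hv₀

theorem kerCard_trichotomy {s : Finset V} {Ω : Submodule (ZMod 2) V}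
    (hsum : ∀ t ∈ s, ∀ t' ∈ s, t + t' ∈ Ω) (hadd : ∀ t ∈ s, ∀ w ∈ Ω, t + w ∈ s)
    (φ : Dual (ZMod 2) V) : kerCard s φ = 0 ∨ 2 * kerCard s φ = #s ∨ kerCard s φ = #s := by
  by_cases hΩ : ∃ w ∈ Ω, φ w ≠ 0
  · obtain ⟨w, hw, hφw⟩ := hΩ
    exact .inr (.inl (two_mul_kerCard_of_add_mem (fun t ht => hadd t ht w hw) hφw))
  push Not at hΩ
  by_cases hs : ∃ t ∈ s, φ t = 0
  · obtain ⟨t, ht, hφt⟩ := hs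
    refine .inr (.inr (card_filter_eq_iff.2 fun t' ht' => ?_))
    have := hΩ _ (hsum t ht t' ht')
    rwa [map_add, hφt, zero_add] at this
  · push Not at hs
    exact .inl (card_eq_zero.2 (filter_eq_empty_iff.2 hs))

theorem four_mul_card_filter_and [Fintype V] {α β : Dual (ZMod 2) V} (hα : α ≠ 0) (hβ : β ≠ 0)
    (hαβ : α + β ≠ 0) : 4 * #{v | α v = 0 ∧ β v = 0} = Fintype.card V := by
  have := kerCard_add_kerCard_add_kerCard_add univ α β
  have := two_mul_kerCard_univ hα
  have := two_mul_kerCard_univ hβ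
  have := two_mul_kerCard_univ hαβ
  rw [card_univ] at *
  omega

theorem eight_mul_card_filter_and_and [Fintype V] {α β γ : Dual (ZMod 2) V} (hα : α ≠ 0)
    (hβ : β ≠ 0) (hγ : γ ≠ 0) (hαβ : α + β ≠ 0) (hαγ : α + γ ≠ 0) (hβγ : β + γ ≠ 0)
    (hαβγ : α + β + γ ≠ 0) : 8 * #{v | α v = 0 ∧ β v = 0 ∧ γ v = 0} = Fintype.card V := by
  have := kerCard_sum_seven univ α β γ
  have := two_mul_kerCard_univ hα
  have := two_mul_kerCard_univ hβ
  have := two_mul_kerCard_univ hγ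
  have := two_mul_kerCard_univ hαβ
  have := two_mul_kerCard_univ hαγ
  have := two_mul_kerCard_univ hβγ
  have := two_mul_kerCard_univ hαβγ
  rw [card_univ] at *
  omega

theorem card_filter_apply_eq_one_le [Fintype V] (α β γ : Dual (ZMod 2) V) :
    #{v | α v = 1 ∧ β v = 1 ∧ γ v = 1} ≤ #{v | α v = 0 ∧ β v = 0 ∧ γ v = 0} := by
  obtain h | ⟨t₀, ht₀⟩ := ({v | α v = 1 ∧ β v = 1 ∧ γ v = 1} : Finset V).eq_empty_or_nonempty
  · simp [h]
  · refine card_le_card_of_injOn (· + t₀) (fun v hv => ?_) fun v _ w _ h => add_right_cancel h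
    simp only [coe_filter, mem_filter, mem_univ, true_and, Set.mem_ofPred_eq, map_add]
      at hv ht₀ ⊢
    rw [hv.1, hv.2.1, hv.2.2, ht₀.1, ht₀.2.1, ht₀.2.2]
    decide

end Counting

section Subspaces

variable {V : Type*} [AddCommGroup V] [Module (ZMod 2) V]

theorem card_filter_mem_eq_two_pow [Fintype V] (X : Submodule (ZMod 2) V)
    [DecidablePred (· ∈ X)] : #{v | v ∈ X} = 2 ^ finrank (ZMod 2) X := by
  rw [← Fintype.card_subtype, card_eq_pow_finrank (K := ZMod 2) (V := X), ZMod.card]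

theorem card_filter_mem_and_ne_zero_add_one [Fintype V] [DecidableEq V]
    (X : Submodule (ZMod 2) V) [DecidablePred (· ∈ X)] :
    #{v | v ∈ X ∧ v ≠ 0} + 1 = 2 ^ finrank (ZMod 2) X := by
  rw [← card_filter_mem_eq_two_pow, ← card_filter_add_card_filter_not (s := {v | v ∈ X})
    (· ≠ 0), filter_filter, filter_filter]
  congr 1
  refine (card_eq_one.2 ⟨0, ?_⟩).symm
  ext v
  simp only [mem_filter, mem_univ, true_and, not_not, mem_singleton]
  exact ⟨fun h => h.2, fun h => ⟨h ▸ X.zero_mem, h⟩⟩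

open Classical in
theorem card_filter_mem_and_not_mem_add_two_pow [Fintype V] {W E' : Submodule (ZMod 2) V}
    (hE'W : E' ≤ W) :
    #{v | v ∈ W ∧ v ∉ E'} + 2 ^ finrank (ZMod 2) E' = 2 ^ finrank (ZMod 2) W := by
  rw [← card_filter_mem_eq_two_pow, ← card_filter_mem_eq_two_pow,
    ← card_filter_add_card_filter_not (s := ({v | v ∈ W} : Finset V)) (· ∈ E'), filter_filter,
    filter_filter, filter_congr fun v _ => and_iff_right_of_imp (@hE'W v), add_comm]

theorem card_filter_apply_eq_zero_and_and [Fintype V] (α β γ : Dual (ZMod 2) V) :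
    #{v | α v = 0 ∧ β v = 0 ∧ γ v = 0} =
      2 ^ finrank (ZMod 2) ↥(LinearMap.ker α ⊓ LinearMap.ker β ⊓ LinearMap.ker γ) := by
  classical
  rw [← card_filter_mem_eq_two_pow]
  simp [and_assoc]

theorem card_filter_apply_eq_zero_and [Fintype V] (α β : Dual (ZMod 2) V) :
    #{v | α v = 0 ∧ β v = 0} = 2 ^ finrank (ZMod 2) ↥(LinearMap.ker α ⊓ LinearMap.ker β) := by
  classical
  rw [← card_filter_mem_eq_two_pow]
  simp

theorem finrank_ker_inf_ker_add_two [Fintype V] {α β : Dual (ZMod 2) V} (hα : α ≠ 0)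
    (hβ : β ≠ 0) (hαβ : α + β ≠ 0) :
    finrank (ZMod 2) ↥(LinearMap.ker α ⊓ LinearMap.ker β) + 2 = finrank (ZMod 2) V := by
  have h := four_mul_card_filter_and hα hβ hαβ
  rw [card_filter_apply_eq_zero_and, card_eq_pow_finrank (K := ZMod 2), ZMod.card] at h
  apply Nat.pow_right_injective le_rfl
  dsimp only
  rw [← h, pow_add]
  ring

theorem finrank_ker_inf_ker_inf_ker_add_three [Fintype V] {α β γ : Dual (ZMod 2) V}
    (hα : α ≠ 0) (hβ : β ≠ 0) (hγ : γ ≠ 0) (hαβ : α + β ≠ 0) (hαγ : α + γ ≠ 0)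
    (hβγ : β + γ ≠ 0) (hαβγ : α + β + γ ≠ 0) :
    finrank (ZMod 2) ↥(LinearMap.ker α ⊓ LinearMap.ker β ⊓ LinearMap.ker γ) + 3 =
      finrank (ZMod 2) V := by
  have h := eight_mul_card_filter_and_and hα hβ hγ hαβ hαγ hβγ hαβγ
  rw [card_filter_apply_eq_zero_and_and, card_eq_pow_finrank (K := ZMod 2), ZMod.card] at h
  apply Nat.pow_right_injective le_rfl
  dsimp only
  rw [← h, pow_add]
  ring

theorem add_mem_of_finrank_eq_add_one [FiniteDimensional (ZMod 2) V]
    {W E' : Submodule (ZMod 2) V} (hE'W : E' ≤ W)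
    (hfin : finrank (ZMod 2) W = finrank (ZMod 2) E' + 1) {t t' : V} (ht : t ∈ W)
    (ht' : t' ∈ W) (htE' : t ∉ E') (ht'E' : t' ∉ E') : t + t' ∈ E' := by
  have hsup : E' ⊔ span (ZMod 2) {t} = W := by
    have hlt : E' < E' ⊔ span (ZMod 2) {t} :=
      lt_of_le_of_ne le_sup_left fun h => htE' (h ▸ mem_sup_right (mem_span_singleton_self t))
    have hle : E' ⊔ span (ZMod 2) {t} ≤ W := sup_le hE'W ((span_singleton_le_iff_mem _ _).2 ht)
    have := finrank_lt_finrank_of_lt hlt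
    have := finrank_mono hle
    exact eq_of_le_of_finrank_eq hle (by omega)
  obtain ⟨e, he, s, hs, rfl⟩ := mem_sup.1 (hsup ▸ ht' : t' ∈ E' ⊔ span (ZMod 2) {t})
  obtain ⟨c, rfl⟩ := mem_span_singleton.1 hs
  by_cases hc : c = 0
  · rw [hc, zero_smul, add_zero] at ht'E'
    exact absurd he ht'E'
  · rwa [ZMod.eq_one_of_ne_zero_two hc, one_smul, add_left_comm, ZModModule.add_self, add_zero]

theorem card_eq_card_filter_forall_not_mem_add_sum [DecidableEq V]
    [∀ B : Submodule (ZMod 2) V, DecidablePred (· ∈ B)] (S : Finset (Submodule (ZMod 2) V))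
    (hS : ∀ B₁ ∈ S, ∀ B₂ ∈ S, B₁ ≠ B₂ → B₁ ⊓ B₂ = ⊥) {Y : Finset V} (hY : 0 ∉ Y) :
    #Y = #{v ∈ Y | ∀ B ∈ S, v ∉ B} + ∑ B ∈ S, #{v ∈ Y | v ∈ B} := by
  rw [← card_filter_add_card_filter_not (s := Y) (fun v => ∀ B ∈ S, v ∉ B), ← card_biUnion]
  · congr 2
    ext v
    simp only [mem_filter, mem_biUnion, not_forall, not_not, exists_prop]
    tauto
  · intro B₁ h₁ B₂ h₂ hne
    refine disjoint_left.2 fun v hv₁ hv₂ => hY ?_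
    have : v ∈ B₁ ⊓ B₂ := mem_inf.2 ⟨(mem_filter.1 hv₁).2, (mem_filter.1 hv₂).2⟩
    rw [hS B₁ h₁ B₂ h₂ hne, mem_bot] at this
    exact this ▸ (mem_filter.1 hv₁).1

end Subspaces

section Moments

variable {V : Type*} [AddCommGroup V] [Module (ZMod 2) V] [Fintype (Dual (ZMod 2) V)]

theorem two_mul_card_filter_apply_eq_zero {v : V} (hv : v ≠ 0) :
    2 * #{φ : Dual (ZMod 2) V | φ v = 0} = Fintype.card (Dual (ZMod 2) V) := by
  convert two_mul_kerCard_univ ((eval_apply_eq_zero_iff _ _).not.2 hv) using 3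
  rfl

theorem four_mul_card_filter_apply_eq_zero_and {u v : V} (hu : u ≠ 0) (hv : v ≠ 0)
    (huv : u ≠ v) :
    4 * #{φ : Dual (ZMod 2) V | φ u = 0 ∧ φ v = 0} = Fintype.card (Dual (ZMod 2) V) := by
  have huv' : u + v ≠ 0 := fun h => huv (ZModModule.eq_of_add_eq_zero h)
  convert four_mul_card_filter_and ((eval_apply_eq_zero_iff _ _).not.2 hu)
    ((eval_apply_eq_zero_iff _ _).not.2 hv)
    (by rw [← map_add]; exact (eval_apply_eq_zero_iff _ _).not.2 huv') using 3
  rfl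

theorem two_mul_sum_kerCard {N : Finset V} (hN : 0 ∉ N) :
    2 * ∑ φ, kerCard N φ = #N * Fintype.card (Dual (ZMod 2) V) := by
  simp only [kerCard, card_filter]
  rw [sum_comm, mul_sum, card_eq_sum_ones, sum_mul]
  refine sum_congr rfl fun v hv => ?_
  rw [one_mul, ← card_filter]
  exact two_mul_card_filter_apply_eq_zero (ne_of_mem_of_not_mem hv hN)

theorem four_mul_sum_kerCard_sq [DecidableEq V] {N : Finset V} (hN : 0 ∉ N) :
    4 * ∑ φ, kerCard N φ ^ 2 = #N * (#N + 1) * Fintype.card (Dual (ZMod 2) V) := by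
  set C := Fintype.card (Dual (ZMod 2) V)
  have hsq (φ : Dual (ZMod 2) V) :
      kerCard N φ ^ 2 = ∑ u ∈ N, ∑ v ∈ N, if φ u = 0 ∧ φ v = 0 then 1 else 0 := by
    simp only [kerCard, card_filter, sq, sum_mul_sum, ite_zero_mul_ite_zero, mul_one]
  have hrow {u : V} (hu : u ∈ N) :
      4 * ∑ v ∈ N, #{φ : Dual (ZMod 2) V | φ u = 0 ∧ φ v = 0} = (#N + 1) * C := by
    have hu0 := ne_of_mem_of_not_mem hu hN
    rw [← add_sum_erase _ _ hu, mul_add, mul_sum]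
    simp only [and_self]
    rw [sum_congr rfl fun v hv => four_mul_card_filter_apply_eq_zero_and hu0
      (ne_of_mem_of_not_mem (mem_of_mem_erase hv) hN) (ne_of_mem_erase hv).symm,
      sum_const, card_erase_of_mem hu, smul_eq_mul]
    have := two_mul_card_filter_apply_eq_zero (V := V) hu0
    obtain ⟨m, hm⟩ : ∃ m, #N = m + 1 := ⟨#N - 1, by have := card_pos.2 ⟨u, hu⟩; omega⟩
    rw [hm, Nat.add_sub_cancel]
    linarith
  simp only [hsq]
  rw [sum_comm, mul_sum, mul_assoc]
  refine sum_const_nat fun u hu => ?_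
  rw [← hrow hu, sum_comm]
  simp only [card_filter]

end Moments

section FourDivisible

variable {V : Type*} [AddCommGroup V] [Module (ZMod 2) V] {N : Finset V}

theorem kerCard_eq_card_iff_eq_zero (hspan : span (ZMod 2) (N : Set V) = ⊤)
    {φ : Dual (ZMod 2) V} : kerCard N φ = #N ↔ φ = 0 := by
  rw [kerCard, card_filter_eq_iff]
  refine ⟨fun h => ?_, fun h v _ => by rw [h, LinearMap.zero_apply]⟩
  have : span (ZMod 2) (N : Set V) ≤ LinearMap.ker φ := span_le.2 h
  rwa [hspan, top_le_iff, LinearMap.ker_eq_top] at this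

theorem kerCard_cases (hN : #N = 15) {φ : Dual (ZMod 2) V} (hdiv : kerCard N φ % 4 = 3) :
    kerCard N φ = 3 ∨ kerCard N φ = 7 ∨ kerCard N φ = 11 ∨ kerCard N φ = 15 := by
  have : kerCard N φ ≤ #N := card_filter_le _ _
  omega

theorem card_filter_kerCard_eq_three [Fintype (Dual (ZMod 2) V)] [DecidableEq V]
    (hV : finrank (ZMod 2) V = 6) (hN0 : 0 ∉ N) (hN : #N = 15)
    (hspan : span (ZMod 2) (N : Set V) = ⊤) (hdiv : ∀ φ, kerCard N φ % 4 = 3) :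
    #{φ | kerCard N φ = 3} = 3 := by
  classical
  have hC : Fintype.card (Dual (ZMod 2) V) = 64 := by
    rw [card_eq_pow_finrank (K := ZMod 2), ZMod.card, Subspace.dual_finrank_eq, hV]; rfl
  have h1 := two_mul_sum_kerCard hN0
  have h2 := four_mul_sum_kerCard_sq hN0
  rw [hN, hC] at h1 h2
  -- `c² + 77 - 18 c` vanishes at `c = 7, 11` and equals `32` at `c = 3, 15`
  have key : ∑ φ, (kerCard N φ ^ 2 + 77) =
      ∑ φ, (18 * kerCard N φ + 32 * if kerCard N φ = 3 ∨ kerCard N φ = 15 then 1 else 0) :=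
    sum_congr rfl fun φ _ => by
      rcases kerCard_cases hN (hdiv φ) with h | h | h | h <;> simp [h]
  have h15 : #{φ | kerCard N φ = 15} = 1 := by
    rw [filter_congr fun φ _ => hN ▸ kerCard_eq_card_iff_eq_zero hspan (φ := φ)]
    exact card_eq_one.2 ⟨0, by ext; simp⟩
  rw [sum_add_distrib, sum_add_distrib, sum_const, card_univ, hC, ← mul_sum, ← mul_sum,
    ← card_filter, filter_or, card_union_of_disjoint (disjoint_filter.2 fun _ _ h => by omega),
    h15, smul_eq_mul] at key
  omega

theorem kerCard_add_eq_eleven (hN : #N = 15) (hspan : span (ZMod 2) (N : Set V) = ⊤)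
    (hdiv : ∀ φ, kerCard N φ % 4 = 3) {α β : Dual (ZMod 2) V} (hα : kerCard N α = 3)
    (hβ : kerCard N β = 3) (hαβ : α ≠ β) :
    kerCard N (α + β) = 11 ∧ #{v ∈ N | α v = 0 ∧ β v = 0} = 1 := by
  have h := kerCard_add_kerCard_add_kerCard_add N α β
  have h15 : kerCard N (α + β) ≠ 15 := fun h =>
    hαβ (ZModModule.eq_of_add_eq_zero ((hN ▸ kerCard_eq_card_iff_eq_zero hspan).1 h))
  rcases kerCard_cases hN (hdiv (α + β)) with h' | h' | h' | h' <;> omega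

theorem kerCard_add_add_eq_seven (hN : #N = 15) (hspan : span (ZMod 2) (N : Set V) = ⊤)
    (hdiv : ∀ φ, kerCard N φ % 4 = 3) {γ₁ γ₂ γ₃ : Dual (ZMod 2) V}
    (h3 : ∀ φ, kerCard N φ = 3 ↔ φ = γ₁ ∨ φ = γ₂ ∨ φ = γ₃)
    (h12 : γ₁ ≠ γ₂) (h13 : γ₁ ≠ γ₃) (h23 : γ₂ ≠ γ₃) :
    kerCard N (γ₁ + γ₂ + γ₃) = 7 ∧ #{v ∈ N | γ₁ v = 0 ∧ γ₂ v = 0 ∧ γ₃ v = 0} = 1 := by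
  have hγ₁ := (h3 γ₁).2 (.inl rfl)
  have hγ₂ := (h3 γ₂).2 (.inr (.inl rfl))
  have hγ₃ := (h3 γ₃).2 (.inr (.inr rfl))
  obtain ⟨h12', hm⟩ := kerCard_add_eq_eleven hN hspan hdiv hγ₁ hγ₂ h12
  have h13' := (kerCard_add_eq_eleven hN hspan hdiv hγ₁ hγ₃ h13).1
  have h23' := (kerCard_add_eq_eleven hN hspan hdiv hγ₂ hγ₃ h23).1
  have h7 := kerCard_sum_seven N γ₁ γ₂ γ₃
  have hle : #{v ∈ N | γ₁ v = 0 ∧ γ₂ v = 0 ∧ γ₃ v = 0} ≤ #{v ∈ N | γ₁ v = 0 ∧ γ₂ v = 0} :=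
    card_le_card fun v hv => by simp only [mem_filter] at hv ⊢; tauto
  have hδ : kerCard N (γ₁ + γ₂ + γ₃) ≠ 3 := by
    intro h
    rcases (h3 _).1 h with h | h | h
    · exact h23 (ZModModule.eq_of_add_eq_zero (add_eq_left.1 (by rw [← add_assoc]; exact h)))
    · refine h13 (ZModModule.eq_of_add_eq_zero (add_eq_left.1 (?_ : γ₂ + (γ₁ + γ₃) = γ₂)))
      rwa [add_left_comm, ← add_assoc]
    · exact h12 (ZModModule.eq_of_add_eq_zero (add_eq_right.1 h))
  omega

theorem apply_eq_one_of_apply_add_add_ne_zero {γ₁ γ₂ γ₃ : Dual (ZMod 2) V}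
    (h12 : #{v ∈ N | γ₁ v = 0 ∧ γ₂ v = 0} = 1) (h13 : #{v ∈ N | γ₁ v = 0 ∧ γ₃ v = 0} = 1)
    (h23 : #{v ∈ N | γ₂ v = 0 ∧ γ₃ v = 0} = 1)
    (h123 : #{v ∈ N | γ₁ v = 0 ∧ γ₂ v = 0 ∧ γ₃ v = 0} = 1) {v : V} (hv : v ∈ N)
    (hδ : (γ₁ + γ₂ + γ₃) v ≠ 0) : γ₁ v = 1 ∧ γ₂ v = 1 ∧ γ₃ v = 1 := by
  have hpair {α β γ : Dual (ZMod 2) V} (hαβ : #{v ∈ N | α v = 0 ∧ β v = 0} = 1)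
      (hαβγ : #{v ∈ N | α v = 0 ∧ β v = 0 ∧ γ v = 0} = 1) (hα : α v = 0) (hβ : β v = 0) :
      γ v = 0 := by
    have hsub : {v ∈ N | α v = 0 ∧ β v = 0 ∧ γ v = 0} ⊆ {v ∈ N | α v = 0 ∧ β v = 0} :=
      fun w hw => by simp only [mem_filter] at hw ⊢; tauto
    have heq := eq_of_subset_of_card_le hsub (by rw [hαβ, hαβγ])
    have : v ∈ {v ∈ N | α v = 0 ∧ β v = 0 ∧ γ v = 0} := heq ▸ mem_filter.2 ⟨hv, hα, hβ⟩
    exact (mem_filter.1 this).2.2.2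
  have h3 := hpair h12 h123
  have h2 := hpair h13 (γ := γ₂) (by rw [← h123]; congr 1; ext; simp only [mem_filter]; tauto)
  have h1 := hpair h23 (γ := γ₁) (by rw [← h123]; congr 1; ext; simp only [mem_filter]; tauto)
  rw [LinearMap.add_apply, LinearMap.add_apply] at hδ
  generalize γ₁ v = x at *; generalize γ₂ v = y at *; generalize γ₃ v = z at *
  revert hδ
  revert h1 h2 h3 x y z
  decide

theorem filter_apply_add_add_ne_zero_eq [Fintype V] (hN : #N = 15) {γ₁ γ₂ γ₃ : Dual (ZMod 2) V}
    (h12 : #{v ∈ N | γ₁ v = 0 ∧ γ₂ v = 0} = 1) (h13 : #{v ∈ N | γ₁ v = 0 ∧ γ₃ v = 0} = 1)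
    (h23 : #{v ∈ N | γ₂ v = 0 ∧ γ₃ v = 0} = 1)
    (h123 : #{v ∈ N | γ₁ v = 0 ∧ γ₂ v = 0 ∧ γ₃ v = 0} = 1) (hδ : kerCard N (γ₁ + γ₂ + γ₃) = 7)
    (hE' : finrank (ZMod 2) ↥(LinearMap.ker γ₁ ⊓ LinearMap.ker γ₂ ⊓ LinearMap.ker γ₃) = 3) :
    {v ∈ N | ¬(γ₁ + γ₂ + γ₃) v = 0} = ({v | γ₁ v = 1 ∧ γ₂ v = 1 ∧ γ₃ v = 1} : Finset V) := by
  refine eq_of_subset_of_card_le (fun v hv => ?_) ?_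
  · obtain ⟨hvN, hvδ⟩ := mem_filter.1 hv
    simpa using apply_eq_one_of_apply_add_add_ne_zero h12 h13 h23 h123 hvN hvδ
  · have := card_filter_add_card_filter_not (s := N) fun v => (γ₁ + γ₂ + γ₃) v = 0
    have := card_filter_apply_eq_one_le γ₁ γ₂ γ₃
    rw [card_filter_apply_eq_zero_and_and, hE'] at this
    rw [kerCard] at hδ
    omega

end FourDivisible

section Classification

variable {V : Type*} [AddCommGroup V] [Module (ZMod 2) V] {N : Finset V}

structure IsPlaneAndAffineSolid (N : Finset V) (E W E' : Submodule (ZMod 2) V) : Prop where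
  finrank_E : finrank (ZMod 2) E = 3
  finrank_W : finrank (ZMod 2) W = 4
  E'_le_W : E' ≤ W
  finrank_E' : finrank (ZMod 2) E' = 3
  finrank_E_inf_W : finrank (ZMod 2) ↥(E ⊓ W) = 1
  E_inf_W_le_E' : E ⊓ W ≤ E'
  mem_iff : ∀ v, v ∈ N ↔ v ≠ 0 ∧ (v ∈ E ∨ v ∈ W ∧ v ∉ E')

theorem finrank_span_eq_three_of_kerCard [Fintype V] [DecidableEq V]
    [Fintype (Dual (ZMod 2) V)] (hV : finrank (ZMod 2) V = 6) {B : Finset V}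
    (hB0 : 0 ∉ B) (hB : #B = 7) (hc : ∀ φ, kerCard B φ = 3 ∨ kerCard B φ = 7) :
    finrank (ZMod 2) (span (ZMod 2) (B : Set V)) = 3 ∧
      ∀ v ∈ span (ZMod 2) (B : Set V), v = 0 ∨ v ∈ B := by
  classical
  set E := span (ZMod 2) (B : Set V)
  have hC : Fintype.card (Dual (ZMod 2) V) = 64 := by
    rw [card_eq_pow_finrank (K := ZMod 2), ZMod.card, Subspace.dual_finrank_eq, hV]; rfl
  have hsum :
      ∑ φ, kerCard B φ = ∑ φ : Dual (ZMod 2) V, (3 + 4 * if kerCard B φ = 7 then 1 else 0) :=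
    sum_congr rfl fun φ _ => by rcases hc φ with h | h <;> simp [h]
  have hann (φ : Dual (ZMod 2) V) : kerCard B φ = 7 ↔ φ ∈ E.dualAnnihilator := by
    rw [← hB, kerCard, card_filter_eq_iff, mem_dualAnnihilator]
    exact ⟨fun h w hw => span_le (p := LinearMap.ker φ).2 h hw, fun h v hv => h v (subset_span hv)⟩
  rw [sum_add_distrib, sum_const, card_univ, hC, ← mul_sum, ← card_filter, smul_eq_mul,
    filter_congr fun φ _ => hann φ, card_filter_mem_eq_two_pow] at hsum
  have h1 := two_mul_sum_kerCard hB0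
  rw [hB, hC] at h1
  have hann3 : finrank (ZMod 2) E.dualAnnihilator = 3 :=
    Nat.pow_right_injective le_rfl (by simp only; omega)
  have hE : finrank (ZMod 2) E = 3 := by
    have := Subspace.finrank_add_finrank_dualAnnihilator_eq E
    omega
  refine ⟨hE, fun v hv => ?_⟩
  have hsub : insert 0 B ⊆ ({v | v ∈ E} : Finset V) := fun v hv => by
    rcases mem_insert.1 hv with rfl | hv
    · simp
    · simpa using subset_span (R := ZMod 2) hv
  have heq := eq_of_subset_of_card_le hsub
    (by rw [card_filter_mem_eq_two_pow, hE, card_insert_of_notMem hB0, hB]; exact le_rfl)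
  have : v ∈ insert 0 B := heq ▸ mem_filter.2 ⟨mem_univ v, hv⟩
  simpa using this

open Classical in
theorem kerCard_sdiff_eq_three_or_seven [Fintype V] [DecidableEq V] (hN : #N = 15)
    (hdiv : ∀ φ, kerCard N φ % 4 = 3) {W E' : Submodule (ZMod 2) V} (hE'W : E' ≤ W)
    (hW : finrank (ZMod 2) W = 4) (hE' : finrank (ZMod 2) E' = 3)
    (hsolid : ∀ v ∈ W, v ∉ E' → v ∈ N) (φ : Dual (ZMod 2) V) :
    kerCard (N \ ({v | v ∈ W ∧ v ∉ E'} : Finset V)) φ = 3 ∨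
      kerCard (N \ ({v | v ∈ W ∧ v ∉ E'} : Finset V)) φ = 7 := by
  set T : Finset V := {v | v ∈ W ∧ v ∉ E'}
  have hmemT {v : V} : v ∈ T ↔ v ∈ W ∧ v ∉ E' := by simp [T]
  have hTN : T ⊆ N := fun v hv => hsolid v (hmemT.1 hv).1 (hmemT.1 hv).2
  have hT : #T + 2 ^ 3 = 2 ^ 4 := hW ▸ hE' ▸ card_filter_mem_and_not_mem_add_two_pow hE'W
  have hsum : ∀ t ∈ T, ∀ t' ∈ T, t + t' ∈ E' := fun t ht t' ht' =>
    add_mem_of_finrank_eq_add_one hE'W (by omega) (hmemT.1 ht).1 (hmemT.1 ht').1 (hmemT.1 ht).2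
      (hmemT.1 ht').2
  have hadd : ∀ t ∈ T, ∀ w ∈ E', t + w ∈ T := fun t ht w hw => hmemT.2
    ⟨add_mem (hmemT.1 ht).1 (hE'W hw), fun h => (hmemT.1 ht).2 (by simpa using sub_mem h hw)⟩
  have hsplit : kerCard N φ = kerCard (N \ T) φ + kerCard T φ := by
    conv_lhs => rw [kerCard, ← sdiff_union_of_subset hTN]
    rw [filter_union, card_union_of_disjoint (disjoint_filter_filter sdiff_disjoint)]
    rfl
  have hle : kerCard (N \ T) φ ≤ #N - #T :=
    (card_filter_le _ _).trans (card_sdiff_of_subset hTN).le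
  have := hdiv φ
  rcases kerCard_trichotomy hsum hadd φ with h | h | h <;> omega

theorem exists_isPlaneAndAffineSolid_of_affineSolid_subset [Fintype V] [DecidableEq V]
    [Fintype (Dual (ZMod 2) V)] (hV : finrank (ZMod 2) V = 6) (hN0 : 0 ∉ N) (hN : #N = 15)
    (hdiv : ∀ φ, kerCard N φ % 4 = 3) {W E' : Submodule (ZMod 2) V} (hE'W : E' ≤ W)
    (hW : finrank (ZMod 2) W = 4)
    (hE' : finrank (ZMod 2) E' = 3) (hsolid : ∀ v ∈ W, v ∉ E' → v ∈ N) {v₀ : V} (hv₀ : v₀ ∈ N)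
    (hNE' : ∀ v ∈ N, v ∈ E' ↔ v = v₀) : ∃ E, IsPlaneAndAffineSolid N E W E' := by
  classical
  set T : Finset V := {v | v ∈ W ∧ v ∉ E'}
  have hmemT {v : V} : v ∈ T ↔ v ∈ W ∧ v ∉ E' := by simp [T]
  have hTN : T ⊆ N := fun v hv => hsolid v (hmemT.1 hv).1 (hmemT.1 hv).2
  have hT : #T + 2 ^ 3 = 2 ^ 4 := hW ▸ hE' ▸ card_filter_mem_and_not_mem_add_two_pow hE'W
  obtain ⟨hE, hmemE⟩ := finrank_span_eq_three_of_kerCard hV (fun h => hN0 (mem_sdiff.1 h).1)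
    (by rw [card_sdiff_of_subset hTN, hN]; omega)
    (kerCard_sdiff_eq_three_or_seven hN hdiv hE'W hW hE' hsolid)
  set E := span (ZMod 2) (↑(N \ T) : Set V)
  have hv₀E' : v₀ ∈ E' := (hNE' v₀ hv₀).2 rfl
  have hEW : E ⊓ W = span (ZMod 2) {v₀} := by
    refine le_antisymm (fun v hv => ?_) ((span_singleton_le_iff_mem _ _).2 (mem_inf.2
      ⟨subset_span (mem_sdiff.2 ⟨hv₀, fun h => (hmemT.1 h).2 hv₀E'⟩), hE'W hv₀E'⟩))
    obtain ⟨hvE, hvW⟩ := mem_inf.1 hv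
    rcases hmemE v hvE with rfl | hvB
    · exact zero_mem _
    · obtain ⟨hvN, hvT⟩ := mem_sdiff.1 hvB
      have hvE' : v ∈ E' := by_contra fun h => hvT (hmemT.2 ⟨hvW, h⟩)
      rw [(hNE' v hvN).1 hvE']
      exact mem_span_singleton_self _
  refine ⟨E, hE, hW, hE'W, hE', ?_, ?_, fun v => ⟨fun hv => ⟨ne_of_mem_of_not_mem hv hN0, ?_⟩, ?_⟩⟩
  · rw [hEW, finrank_span_singleton (ne_of_mem_of_not_mem hv₀ hN0)]
  · rwa [hEW, span_singleton_le_iff_mem]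
  · by_cases hvT : v ∈ T
    · exact .inr (hmemT.1 hvT)
    · exact .inl (subset_span (mem_sdiff.2 ⟨hv, hvT⟩))
  · rintro ⟨hv0, hvE | ⟨hvW, hvE'⟩⟩
    · exact (mem_sdiff.1 ((hmemE v hvE).resolve_left hv0)).1
    · exact hsolid v hvW hvE'

theorem exists_affineSolid_subset [Fintype V] [DecidableEq V] [Fintype (Dual (ZMod 2) V)]
    (hV : finrank (ZMod 2) V = 6) (hN0 : 0 ∉ N) (hN : #N = 15)
    (hspan : span (ZMod 2) (N : Set V) = ⊤) (hdiv : ∀ φ, kerCard N φ % 4 = 3) :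
    ∃ W E' : Submodule (ZMod 2) V, E' ≤ W ∧ finrank (ZMod 2) W = 4 ∧ finrank (ZMod 2) E' = 3 ∧
      (∀ v ∈ W, v ∉ E' → v ∈ N) ∧ ∃ v₀ ∈ N, ∀ v ∈ N, v ∈ E' ↔ v = v₀ := by
  obtain ⟨γ₁, γ₂, γ₃, h12, h13, h23, hA3⟩ :=
    card_eq_three.1 (card_filter_kerCard_eq_three hV hN0 hN hspan hdiv)
  have h3 (φ) : kerCard N φ = 3 ↔ φ = γ₁ ∨ φ = γ₂ ∨ φ = γ₃ := by simpa using congr(φ ∈ $hA3)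
  have hγ₁ := (h3 γ₁).2 (.inl rfl)
  have hγ₂ := (h3 γ₂).2 (.inr (.inl rfl))
  have hγ₃ := (h3 γ₃).2 (.inr (.inr rfl))
  obtain ⟨hδ, h123⟩ := kerCard_add_add_eq_seven hN hspan hdiv h3 h12 h13 h23
  obtain ⟨h12', hm12⟩ := kerCard_add_eq_eleven hN hspan hdiv hγ₁ hγ₂ h12
  obtain ⟨h13', hm13⟩ := kerCard_add_eq_eleven hN hspan hdiv hγ₁ hγ₃ h13
  obtain ⟨h23', hm23⟩ := kerCard_add_eq_eleven hN hspan hdiv hγ₂ hγ₃ h23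
  have hne {φ : Dual (ZMod 2) V} (h : kerCard N φ ≠ 15) : φ ≠ 0 := by
    rintro rfl
    exact h (by simp [kerCard, hN])
  have hE' := finrank_ker_inf_ker_inf_ker_add_three (α := γ₁) (β := γ₂) (γ := γ₃)
    (hne (by omega)) (hne (by omega)) (hne (by omega)) (hne (by omega)) (hne (by omega))
    (hne (by omega)) (hne (by omega))
  have hW := finrank_ker_inf_ker_add_two (α := γ₁ + γ₂) (β := γ₂ + γ₃) (hne (by omega))
    (hne (by omega)) (by rw [ZModModule.add_add_add_cancel]; exact hne (by omega))
  have hA := filter_apply_add_add_ne_zero_eq hN hm12 hm13 hm23 h123 hδ (by omega)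
  obtain ⟨v₀, hv₀⟩ := card_eq_one.1 h123
  refine ⟨LinearMap.ker (γ₁ + γ₂) ⊓ LinearMap.ker (γ₂ + γ₃),
    LinearMap.ker γ₁ ⊓ LinearMap.ker γ₂ ⊓ LinearMap.ker γ₃, fun v hv => ?_, by omega, by omega,
    fun v hvW hvE' => ?_, v₀, (mem_filter.1 (hv₀ ▸ mem_singleton_self v₀)).1, fun v hv => ?_⟩
  · simp only [Submodule.mem_inf, LinearMap.mem_ker, LinearMap.add_apply] at hv ⊢
    rw [hv.1.1, hv.1.2, hv.2, add_zero]
    exact ⟨rfl, rfl⟩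
  · have : v ∈ ({v | γ₁ v = 1 ∧ γ₂ v = 1 ∧ γ₃ v = 1} : Finset V) := by
      simp only [Submodule.mem_inf, LinearMap.mem_ker, LinearMap.add_apply, not_and]
        at hvW hvE'
      simp only [mem_filter, mem_univ, true_and]
      generalize γ₁ v = x at *; generalize γ₂ v = y at *; generalize γ₃ v = z at *
      revert hvE'
      revert hvW x y z
      decide
    exact (mem_filter.1 (hA ▸ this)).1
  · rw [← mem_singleton, ← hv₀]
    simp [hv, and_assoc]

theorem exists_isPlaneAndAffineSolid_of_span_eq_top [Fintype V] [DecidableEq V]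
    [Fintype (Dual (ZMod 2) V)] {N : Finset V} (hV : finrank (ZMod 2) V = 6) (hN0 : 0 ∉ N)
    (hN : #N = 15) (hspan : span (ZMod 2) (N : Set V) = ⊤) (hdiv : ∀ φ, kerCard N φ % 4 = 3) :
    ∃ E W E', IsPlaneAndAffineSolid N E W E' := by
  obtain ⟨W, E', hE'W, hW, hE', hsolid, v₀, hv₀, hNE'⟩ :=
    exists_affineSolid_subset hV hN0 hN hspan hdiv
  obtain ⟨E, hE⟩ :=
    exists_isPlaneAndAffineSolid_of_affineSolid_subset hV hN0 hN hdiv hE'W hW hE' hsolid hv₀ hNE'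
  exact ⟨E, W, E', hE⟩

end Classification

section Descent

variable {V : Type*} [AddCommGroup V] [Module (ZMod 2) V]

theorem kerCard_map_subtype {H : Submodule (ZMod 2) V} (N : Finset H) (ψ : Dual (ZMod 2) V) :
    kerCard (N.map (Function.Embedding.subtype _)) ψ = kerCard N (ψ ∘ₗ H.subtype) := by
  rw [kerCard, filter_map, card_map]
  rfl

theorem IsPlaneAndAffineSolid.map_subtype {H : Submodule (ZMod 2) V} {N : Finset H}
    {E W E' : Submodule (ZMod 2) H} (h : IsPlaneAndAffineSolid N E W E') :
    IsPlaneAndAffineSolid (N.map (Function.Embedding.subtype _)) (E.map H.subtype)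
      (W.map H.subtype) (E'.map H.subtype) where
  finrank_E := (finrank_map_subtype_eq H E).trans h.finrank_E
  finrank_W := (finrank_map_subtype_eq H W).trans h.finrank_W
  E'_le_W := map_mono h.E'_le_W
  finrank_E' := (finrank_map_subtype_eq H E').trans h.finrank_E'
  finrank_E_inf_W := by
    rw [← map_inf _ H.injective_subtype, finrank_map_subtype_eq, h.finrank_E_inf_W]
  E_inf_W_le_E' := by
    rw [← map_inf _ H.injective_subtype]
    exact map_mono h.E_inf_W_le_E'
  mem_iff v := by
    by_cases hv : v ∈ H
    · lift v to H using hv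
      simp [h.mem_iff]
    · have (X : Submodule (ZMod 2) H) : v ∉ X.map H.subtype := fun hX =>
        hv (map_subtype_le H X hX)
      simp [this, hv]

theorem exists_isPlaneAndAffineSolid [Fintype V] [DecidableEq V] {N : Finset V} (hN0 : 0 ∉ N)
    (hN : #N = 15) (hspan : finrank (ZMod 2) (span (ZMod 2) (N : Set V)) = 6)
    (hdiv : ∀ ψ, kerCard N ψ % 4 = 3) : ∃ E W E', IsPlaneAndAffineSolid N E W E' := by
  classical
  set H := span (ZMod 2) (N : Set V)
  have hN' : (N.subtype (· ∈ H)).map (Function.Embedding.subtype _) = N :=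
    subtype_map_of_mem fun v hv => subset_span hv
  have : Fintype (Dual (ZMod 2) H) := @Fintype.ofFinite _ (Module.finite_of_finite (ZMod 2))
  have hspan' : span (ZMod 2) (N.subtype (· ∈ H) : Set H) = ⊤ := by
    convert span_span_coe_preimage (R := ZMod 2) (s := (N : Set V)) using 2
    · rfl
    · ext
      simp
  obtain ⟨E, W, E', h⟩ := exists_isPlaneAndAffineSolid_of_span_eq_top hspan
    (by simpa using hN0) (by rw [← card_map, hN', hN]) hspan' fun φ => by
      obtain ⟨ψ, rfl⟩ := LinearMap.exists_extend φ
      rw [← kerCard_map_subtype, hN']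
      exact hdiv ψ
  exact ⟨_, _, _, hN' ▸ h.map_subtype⟩

end Descent

section Holes

variable {S : Set (Submodule (ZMod 2) V2)}

/-- The hole set `N`, each hole `⟨v⟩` being represented by its unique nonzero vector `v`. -/
noncomputable def holeVecs (S : Set (Submodule (ZMod 2) V2)) : Finset V2 :=
  open Classical in {v | v ≠ 0 ∧ ∀ B ∈ S, v ∉ B}

theorem mem_holeVecs {v : V2} : v ∈ holeVecs S ↔ v ≠ 0 ∧ ∀ B ∈ S, v ∉ B := by
  simp [holeVecs]

theorem isHole_span_singleton_iff {v : V2} (hv : v ≠ 0) :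
    IsHole S (span (ZMod 2) {v}) ↔ v ∈ holeVecs S := by
  simp [IsHole, mem_holeVecs, finrank_span_singleton hv, hv, span_singleton_le_iff_mem]

theorem holeSpan_eq_span_holeVecs : holeSpan S = span (ZMod 2) (holeVecs S : Set V2) := by
  refine le_antisymm (sSup_le fun P hP => ?_) (span_le.2 fun v hv => ?_)
  · obtain ⟨v, hv, rfl⟩ := exists_eq_span_singleton_of_finrank_eq_one hP.1
    exact span_mono (Set.singleton_subset_iff.2 ((isHole_span_singleton_iff hv).1 hP))
  · have hle : span (ZMod 2) {v} ≤ holeSpan S :=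
      le_sSup ((isHole_span_singleton_iff (mem_holeVecs.1 hv).1).2 hv)
    exact hle (mem_span_singleton_self v)

open Classical in
theorem card_filter_mem_and_ne_zero_eq_holeVecs (hS : IsPPS S) (X : Submodule (ZMod 2) V2) :
    #{v | v ∈ X ∧ v ≠ 0} = #{v ∈ holeVecs S | v ∈ X} +
      ∑ B ∈ S.toFinite.toFinset, #{v | v ∈ B ⊓ X ∧ v ≠ 0} := by
  rw [card_eq_card_filter_forall_not_mem_add_sum S.toFinite.toFinset (fun B₁ h₁ B₂ h₂ =>
    hS.2 B₁ (by simpa using h₁) B₂ (by simpa using h₂)) (by simp)]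
  congr 1
  · congr 1
    ext v
    simp only [mem_filter, mem_univ, true_and, mem_holeVecs, Set.Finite.mem_toFinset]
    tauto
  · refine sum_congr rfl fun B _ => ?_
    congr 1
    ext v
    simp only [mem_filter, mem_univ, true_and, Submodule.mem_inf]
    tauto

theorem card_holeVecs (hS : IsPPS S) (h16 : S.ncard = 16) : #(holeVecs S) = 15 := by
  classical
  have h := card_filter_mem_and_ne_zero_eq_holeVecs hS ⊤
  have htop := card_filter_mem_and_ne_zero_add_one (⊤ : Submodule (ZMod 2) V2)
  have hB (B) (hB : B ∈ S.toFinite.toFinset) : #{v | v ∈ B ⊓ ⊤ ∧ v ≠ 0} = 7 := by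
    have := card_filter_mem_and_ne_zero_add_one (B ⊓ ⊤)
    rw [inf_top_eq, hS.1 B (by simpa using hB)] at this
    simpa using this
  rw [sum_congr rfl hB, sum_const, ← Set.ncard_eq_toFinset_card S, h16, smul_eq_mul,
    filter_true_of_mem fun v _ => mem_top] at h
  simp only [finrank_top, finrank_fin_fun] at htop
  omega

theorem kerCard_holeVecs_mod_four (hS : IsPPS S) (h16 : S.ncard = 16)
    (ψ : Dual (ZMod 2) V2) : kerCard (holeVecs S) ψ % 4 = 3 := by
  classical
  have hX : 6 ≤ finrank (ZMod 2) (LinearMap.ker ψ) := by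
    have := LinearMap.finrank_range_add_finrank_ker ψ
    have := finrank_le (LinearMap.range ψ)
    simp only [finrank_fin_fun, finrank_self] at *
    omega
  -- every block meets the hyperplane `ker ψ` in a line or lies in it: `3` or `7` points
  have hB (B) (hB : B ∈ S.toFinite.toFinset) :
      #{v | v ∈ B ⊓ LinearMap.ker ψ ∧ v ≠ 0} % 4 = 3 := by
    have hcard := card_filter_mem_and_ne_zero_add_one (B ⊓ LinearMap.ker ψ)
    have := finrank_sup_add_finrank_inf_eq B (LinearMap.ker ψ)
    have := finrank_le (B ⊔ LinearMap.ker ψ)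
    have := finrank_mono (inf_le_left : B ⊓ LinearMap.ker ψ ≤ B)
    have := hS.1 B (by simpa using hB)
    simp only [finrank_fin_fun] at *
    obtain h | h : finrank (ZMod 2) ↥(B ⊓ LinearMap.ker ψ) = 2 ∨
        finrank (ZMod 2) ↥(B ⊓ LinearMap.ker ψ) = 3 := by omega
    all_goals rw [h] at hcard; omega
  have hsum := sum_nat_mod S.toFinite.toFinset 4
    fun B => #{v | v ∈ B ⊓ LinearMap.ker ψ ∧ v ≠ 0}
  rw [sum_congr rfl hB, sum_const, ← Set.ncard_eq_toFinset_card S, h16, smul_eq_mul] at hsum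
  have h := card_filter_mem_and_ne_zero_eq_holeVecs hS (LinearMap.ker ψ)
  have hker := card_filter_mem_and_ne_zero_add_one (LinearMap.ker ψ)
  obtain ⟨k, hk⟩ : ∃ k, finrank (ZMod 2) (LinearMap.ker ψ) = k + 2 :=
    ⟨_, (Nat.sub_add_cancel (by omega)).symm⟩
  rw [hk, pow_add] at hker
  have : kerCard (holeVecs S) ψ = #{v ∈ holeVecs S | v ∈ LinearMap.ker ψ} := by
    unfold kerCard
    congr 1
    ext v
    simp
  omega

theorem exists_isPlaneAndAffineSolid_holeVecs (hS : IsPPS S) (h16 : S.ncard = 16)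
    (hn : finrank (ZMod 2) ↥(holeSpan S) = 6) :
    ∃ E W E', IsPlaneAndAffineSolid (holeVecs S) E W E' :=
  exists_isPlaneAndAffineSolid (by simp [mem_holeVecs]) (card_holeVecs hS h16)
    (by rwa [← holeSpan_eq_span_holeVecs]) (kerCard_holeVecs_mod_four hS h16)

end Holes

theorem hole_structure_n6 (S : Set (Submodule (ZMod 2) V2)) (hS : IsPPS S)
    (h16 : S.ncard = 16) (hn : finrank (ZMod 2) ↥(holeSpan S) = 6) :
    ∃ E W E' : Submodule (ZMod 2) V2,
      finrank (ZMod 2) ↥E = 3 ∧ finrank (ZMod 2) ↥W = 4 ∧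
      E' ≤ W ∧ finrank (ZMod 2) ↥E' = 3 ∧
      finrank (ZMod 2) ↥(E ⊓ W) = 1 ∧
      (∀ P : Submodule (ZMod 2) V2, finrank (ZMod 2) ↥P = 1 → P ≤ E → IsHole S P) ∧
      (∀ P : Submodule (ZMod 2) V2, finrank (ZMod 2) ↥P = 1 → P ≤ W → ¬ P ≤ E' →
        IsHole S P) ∧
      {P | IsHole S P} =
        {P : Submodule (ZMod 2) V2 | finrank (ZMod 2) ↥P = 1 ∧
          (P ≤ E ∨ (P ≤ W ∧ ¬ P ≤ E'))} ∧
      {P : Submodule (ZMod 2) V2 | finrank (ZMod 2) ↥P = 1 ∧ P ≤ E} ∩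
        {P : Submodule (ZMod 2) V2 | finrank (ZMod 2) ↥P = 1 ∧ P ≤ W ∧ ¬ P ≤ E'}
        = ∅ := by
  obtain ⟨E, W, E', h⟩ := exists_isPlaneAndAffineSolid_holeVecs hS h16 hn
  have key (P : Submodule (ZMod 2) V2) (hP : finrank (ZMod 2) P = 1) :
      IsHole S P ↔ P ≤ E ∨ P ≤ W ∧ ¬P ≤ E' := by
    obtain ⟨v, hv, rfl⟩ := exists_eq_span_singleton_of_finrank_eq_one hP
    simp only [isHole_span_singleton_iff hv, h.mem_iff, span_singleton_le_iff_mem, ne_eq, hv,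
      not_false_eq_true, true_and]
  refine ⟨E, W, E', h.finrank_E, h.finrank_W, h.E'_le_W, h.finrank_E', h.finrank_E_inf_W,
    fun P hP hPE => (key P hP).2 (.inl hPE), fun P hP hPW hPE' => (key P hP).2 (.inr ⟨hPW, hPE'⟩),
    ?_, ?_⟩
  · ext P
    exact ⟨fun hP => ⟨hP.1, (key P hP.1).1 hP⟩, fun hP => (key P hP.1).2 hP.2⟩
  · refine Set.eq_empty_of_forall_notMem fun P ⟨⟨_, hPE⟩, _, hPW, hPE'⟩ => hPE' ?_
    exact (le_inf hPE hPW).trans h.E_inf_W_le_E'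
end

section
/- Let S be a partial plane spread in PG(6,2) of size 16 and let ⟨N⟩ be the span of its holes. Then for every subspace W ≤ ⟨N⟩ with dim W = dim⟨N⟩ − 2, the number h(W) of holes contained in W is odd. -/
open Module

def HoleVec (S : Set (Submodule (ZMod 2) V2)) (v : V2) : Prop :=
  v ≠ 0 ∧ ∀ B ∈ S, v ∉ B

lemma count_nonzero (Y : Submodule (ZMod 2) V2) :
    {v : V2 | v ∈ Y ∧ v ≠ 0}.ncard + 1 = 2 ^ finrank (ZMod 2) ↥Y := by
  have hY : Nat.card ↥Y = 2 ^ finrank (ZMod 2) ↥Y := by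
    have : Fintype ↥Y := Fintype.ofFinite _
    rw [Nat.card_eq_fintype_card, card_eq_pow_finrank (K := ZMod 2)]
    simp
  have h1 : (Y : Set V2).ncard = 2 ^ finrank (ZMod 2) ↥Y := by
    rw [← hY, ← Nat.card_coe_set_eq]; rfl
  have h2 : (Y : Set V2) = insert 0 {v : V2 | v ∈ Y ∧ v ≠ 0} := by
    ext v
    simp only [Set.mem_insert_iff, SetLike.mem_coe, Set.mem_setOf_eq]
    by_cases h : v = 0 <;> simp [h, Submodule.zero_mem]
  rw [h2, Set.ncard_insert_of_notMem (by simp) (Set.toFinite _)] at h1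
  omega

noncomputable def ptsF (Y : Submodule (ZMod 2) V2) : Finset V2 :=
  (Set.toFinite {v : V2 | v ∈ Y ∧ v ≠ 0}).toFinset

lemma ptsF_card (Y : Submodule (ZMod 2) V2) :
    (ptsF Y).card + 1 = 2 ^ finrank (ZMod 2) ↥Y := by
  rw [ptsF, ← Set.ncard_eq_toFinset_card]; exact count_nonzero Y

lemma partition_count {S : Set (Submodule (ZMod 2) V2)} (hS : IsPPS S) (hfin : S.Finite)
    (X : Submodule (ZMod 2) V2) :
    (ptsF X).card = ∑ B ∈ hfin.toFinset, (ptsF (B ⊓ X)).card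
      + {v : V2 | HoleVec S v ∧ v ∈ X}.ncard := by
  classical
  have hmem : ∀ B, B ∈ hfin.toFinset ↔ B ∈ S := fun B => hfin.mem_toFinset
  have hsplit : ptsF X = hfin.toFinset.biUnion (fun B => ptsF (B ⊓ X))
      ∪ (Set.toFinite {v : V2 | HoleVec S v ∧ v ∈ X}).toFinset := by
    ext v
    simp only [ptsF, Set.Finite.mem_toFinset, Set.mem_setOf_eq, Finset.mem_union,
      Finset.mem_biUnion, Submodule.mem_inf, HoleVec]
    constructor
    · rintro ⟨hvX, hv0⟩
      by_cases h : ∃ B ∈ S, v ∈ B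
      · obtain ⟨B, hB, hvB⟩ := h
        exact Or.inl ⟨B, hB, ⟨hvB, hvX⟩, hv0⟩
      · push_neg at h
        exact Or.inr ⟨⟨hv0, h⟩, hvX⟩
    · rintro (⟨B, _, ⟨_, hvX⟩, hv0⟩ | ⟨⟨hv0, _⟩, hvX⟩) <;> exact ⟨hvX, hv0⟩
  have hdisj : Disjoint (hfin.toFinset.biUnion (fun B => ptsF (B ⊓ X)))
      ((Set.toFinite {v : V2 | HoleVec S v ∧ v ∈ X}).toFinset) := by
    rw [Finset.disjoint_left]
    intro v hv hv'
    simp only [Finset.mem_biUnion, ptsF, Set.Finite.mem_toFinset, Set.mem_setOf_eq,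
      Submodule.mem_inf, HoleVec] at hv hv'
    obtain ⟨B, hB, ⟨hvB, _⟩, _⟩ := hv
    exact hv'.1.2 B hB hvB
  have hpw : ∀ B₁ ∈ hfin.toFinset, ∀ B₂ ∈ hfin.toFinset, B₁ ≠ B₂ →
      Disjoint (ptsF (B₁ ⊓ X)) (ptsF (B₂ ⊓ X)) := by
    intro B₁ h1 B₂ h2 hne
    rw [Finset.disjoint_left]
    intro v hv hv'
    simp only [ptsF, Set.Finite.mem_toFinset, Set.mem_setOf_eq, Submodule.mem_inf] at hv hv'
    have : v ∈ B₁ ⊓ B₂ := ⟨hv.1.1, hv'.1.1⟩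
    rw [hS.2 B₁ ((hmem B₁).1 h1) B₂ ((hmem B₂).1 h2) hne] at this
    exact hv.2 this
  rw [hsplit, Finset.card_union_of_disjoint hdisj, Finset.card_biUnion hpw,
    Set.ncard_eq_toFinset_card]

lemma total_holes {S : Set (Submodule (ZMod 2) V2)} (hS : IsPPS S) (hfin : S.Finite)
    (h16 : S.ncard = 16) : {v : V2 | HoleVec S v}.ncard = 15 := by
  have h := partition_count hS hfin ⊤
  have htop : (ptsF (⊤ : Submodule (ZMod 2) V2)).card + 1 = 128 := by
    rw [ptsF_card]
    rw [finrank_top, finrank_V2]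
    norm_num
  have hterm : ∀ B ∈ hfin.toFinset, (ptsF (B ⊓ ⊤)).card = 7 := by
    intro B hB
    have hB' : B ∈ S := hfin.mem_toFinset.1 hB
    have : (ptsF (B ⊓ ⊤)).card + 1 = 2 ^ finrank (ZMod 2) ↥(B ⊓ ⊤) := ptsF_card _
    rw [inf_top_eq] at this ⊢
    rw [hS.1 B hB'] at this
    norm_num at this
    omega
  rw [Finset.sum_congr rfl hterm, Finset.sum_const] at h
  have hcard : hfin.toFinset.card = 16 := by
    rw [← Set.ncard_eq_toFinset_card _ hfin, h16]
  rw [hcard] at h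
  have heq : {v : V2 | HoleVec S v ∧ v ∈ (⊤ : Submodule (ZMod 2) V2)}.ncard
      = {v : V2 | HoleVec S v}.ncard := by
    congr 1; ext v; simp
  rw [heq] at h
  simp only [smul_eq_mul] at h
  omega

lemma hyper_count {S : Set (Submodule (ZMod 2) V2)} (hS : IsPPS S) (hfin : S.Finite)
    (h16 : S.ncard = 16) (H : Submodule (ZMod 2) V2) (hH : finrank (ZMod 2) ↥H = 6) :
    ∃ a : ℕ, {v : V2 | HoleVec S v ∧ v ∈ H}.ncard + 4 * a = 15 := by
  classical
  have h := partition_count hS hfin H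
  have hdim : ∀ B ∈ hfin.toFinset,
      finrank (ZMod 2) ↥(B ⊓ H) = 2 ∨ finrank (ZMod 2) ↥(B ⊓ H) = 3 := by
    intro B hB
    have hB' : B ∈ S := hfin.mem_toFinset.1 hB
    have h1 := Submodule.finrank_sup_add_finrank_inf_eq B H
    have h2 : finrank (ZMod 2) ↥(B ⊔ H) ≤ 7 := by
      have := Submodule.finrank_le (B ⊔ H)
      rwa [finrank_V2] at this
    have h3 : finrank (ZMod 2) ↥(B ⊓ H) ≤ 3 := by
      rw [← hS.1 B hB']; exact Submodule.finrank_mono inf_le_left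
    rw [hS.1 B hB', hH] at h1
    omega
  set p : Submodule (ZMod 2) V2 → Prop := fun B => finrank (ZMod 2) ↥(B ⊓ H) = 3 with hp
  refine ⟨(hfin.toFinset.filter p).card, ?_⟩
  have hterm : ∀ B ∈ hfin.toFinset, (ptsF (B ⊓ H)).card = if p B then 7 else 3 := by
    intro B hB
    have := ptsF_card (B ⊓ H)
    rcases hdim B hB with h2 | h3
    · have hnp : ¬ p B := by rw [hp]; simp [h2]
      rw [if_neg hnp]; rw [h2] at this; omega
    · rw [if_pos h3]; rw [h3] at this; omega
  rw [Finset.sum_congr rfl hterm, Finset.sum_ite, Finset.sum_const, Finset.sum_const] at h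
  have hHcard : (ptsF H).card + 1 = 64 := by rw [ptsF_card, hH]; norm_num
  have hcard : hfin.toFinset.card = 16 := by
    rw [← Set.ncard_eq_toFinset_card _ hfin, h16]
  have hsplit := Finset.card_filter_add_card_filter_not
    (s := hfin.toFinset) (p := p)
  rw [hcard] at hsplit
  simp only [smul_eq_mul] at h
  have e1 : Finset.filter (fun x => p x) hfin.toFinset = Finset.filter p hfin.toFinset := rfl
  rw [e1] at h
  omega

lemma zmod2_cases : ∀ a : ZMod 2, a ≠ 0 → a = 1 := by decide

lemma ker_finrank {g : V2 →ₗ[ZMod 2] ZMod 2} (hg : g ≠ 0) :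
    finrank (ZMod 2) ↥(LinearMap.ker g) = 6 := by
  have hsurj : LinearMap.range g = ⊤ := by
    obtain ⟨v, hv⟩ : ∃ v, g v ≠ 0 := by
      by_contra h
      push_neg at h
      exact hg (by ext w; simp [h])
    have hv1 : g v = 1 := zmod2_cases _ hv
    rw [Submodule.eq_top_iff']
    intro x
    exact ⟨x • v, by simp [hv1]⟩
  have := LinearMap.finrank_range_add_finrank_ker g
  rw [hsurj, finrank_top, finrank_V2] at this
  simp only [finrank_self] at this
  omega

-- triple sum identity
lemma triple_sum {S : Set (Submodule (ZMod 2) V2)} (hS : IsPPS S) (hfin : S.Finite)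
    (h16 : S.ncard = 16) (W' : Submodule (ZMod 2) V2)
    (f g : V2 →ₗ[ZMod 2] ZMod 2)
    (hker : LinearMap.ker f ⊓ LinearMap.ker g = W') :
    {v : V2 | HoleVec S v ∧ v ∈ LinearMap.ker f}.ncard
      + {v : V2 | HoleVec S v ∧ v ∈ LinearMap.ker g}.ncard
      + {v : V2 | HoleVec S v ∧ v ∈ LinearMap.ker (f + g)}.ncard
      = 15 + 2 * {v : V2 | HoleVec S v ∧ v ∈ W'}.ncard := by
  classical
  set HF : Finset V2 := (Set.toFinite {v : V2 | HoleVec S v}).toFinset with hHF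
  have hkey : ∀ X : Submodule (ZMod 2) V2,
      {v : V2 | HoleVec S v ∧ v ∈ X}.ncard = ∑ v ∈ HF, (if v ∈ X then 1 else 0) := by
    intro X
    have hfil : (Set.toFinite {v : V2 | HoleVec S v ∧ v ∈ X}).toFinset
        = HF.filter (fun v => v ∈ X) := by
      ext v
      simp [hHF, Set.Finite.mem_toFinset, Finset.mem_filter, and_comm]
    rw [Set.ncard_eq_toFinset_card _ (Set.toFinite _), hfil, Finset.card_filter]
  have hHFcard : HF.card = 15 := by
    rw [hHF, ← Set.ncard_eq_toFinset_card]
    exact total_holes hS hfin h16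
  rw [hkey, hkey, hkey, hkey, ← Finset.sum_add_distrib, ← Finset.sum_add_distrib]
  have h11 : (1 : ZMod 2) + 1 = 0 := by decide
  have h01 : (0 : ZMod 2) + 1 ≠ 0 := by decide
  have hpt : ∀ v ∈ HF,
      ((if v ∈ LinearMap.ker f then 1 else 0) + (if v ∈ LinearMap.ker g then 1 else 0)
        + (if v ∈ LinearMap.ker (f + g) then (1:ℕ) else 0))
      = 1 + 2 * (if v ∈ W' then 1 else 0) := by
    intro v _
    have hw : (v ∈ W') ↔ (f v = 0 ∧ g v = 0) := by
      rw [← hker]; simp [Submodule.mem_inf, LinearMap.mem_ker]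
    by_cases hf : f v = 0 <;> by_cases hgv : g v = 0
    · simp [LinearMap.mem_ker, hf, hgv, hw]
    · have hg1 : g v = 1 := zmod2_cases _ hgv
      simp [LinearMap.mem_ker, hf, hgv, hg1, hw, h01]
    · have hf1 : f v = 1 := zmod2_cases _ hf
      simp [LinearMap.mem_ker, hf, hgv, hf1, hw, h01, add_comm]
    · have hf1 : f v = 1 := zmod2_cases _ hf
      have hg1 : g v = 1 := zmod2_cases _ hgv
      simp [LinearMap.mem_ker, hf, hgv, hf1, hg1, hw, h11]
  rw [Finset.sum_congr rfl hpt, Finset.sum_add_distrib, Finset.sum_const, ← Finset.mul_sum]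
  simp [hHFcard]

lemma codim2_odd {S : Set (Submodule (ZMod 2) V2)} (hS : IsPPS S) (hfin : S.Finite)
    (h16 : S.ncard = 16) (W' : Submodule (ZMod 2) V2)
    (hW5 : finrank (ZMod 2) ↥W' = 5) :
    Odd {v : V2 | HoleVec S v ∧ v ∈ W'}.ncard := by
  have hQ2 : finrank (ZMod 2) (V2 ⧸ W') = 2 := by
    have := Submodule.finrank_quotient_add_finrank W'
    rw [finrank_V2, hW5] at this
    omega
  let b : Basis (Fin 2) (ZMod 2) (V2 ⧸ W') := finBasisOfFinrankEq (ZMod 2) _ hQ2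
  let f : V2 →ₗ[ZMod 2] ZMod 2 := (b.coord 0).comp W'.mkQ
  let g : V2 →ₗ[ZMod 2] ZMod 2 := (b.coord 1).comp W'.mkQ
  obtain ⟨v0, hv0⟩ := Submodule.mkQ_surjective W' (b 0)
  obtain ⟨v1, hv1⟩ := Submodule.mkQ_surjective W' (b 1)
  have hf0 : f v0 = 1 := by
    simp [f, hv0, Basis.coord_apply, Basis.repr_self]
  have hg0 : g v0 = 0 := by
    simp [g, hv0, Basis.coord_apply, Basis.repr_self, Finsupp.single_eq_of_ne]
  have hg1 : g v1 = 1 := by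
    simp [g, hv1, Basis.coord_apply, Basis.repr_self]
  have hf1 : f v1 = 0 := by
    simp [f, hv1, Basis.coord_apply, Basis.repr_self, Finsupp.single_eq_of_ne]
  have hfne : f ≠ 0 := by
    intro h; rw [h] at hf0; simp at hf0
  have hgne : g ≠ 0 := by
    intro h; rw [h] at hg1; simp at hg1
  have hfgne : f + g ≠ 0 := by
    intro h
    have : (f + g) v0 = 0 := by rw [h]; simp
    rw [LinearMap.add_apply, hf0, hg0] at this
    simp at this
  have hker : LinearMap.ker f ⊓ LinearMap.ker g = W' := by
    ext v
    simp only [Submodule.mem_inf, LinearMap.mem_ker, f, g, LinearMap.comp_apply,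
      Basis.coord_apply]
    constructor
    · rintro ⟨h0, h1⟩
      have : b.repr (W'.mkQ v) = 0 := by
        ext i
        fin_cases i
        · exact h0
        · exact h1
      have : W'.mkQ v = 0 := by
        have h' := b.repr.map_eq_zero_iff.1 this
        exact h'
      rwa [← Submodule.Quotient.mk_eq_zero, ← Submodule.mkQ_apply]
    · intro hv
      have : W'.mkQ v = 0 := by
        rwa [Submodule.mkQ_apply, Submodule.Quotient.mk_eq_zero]
      simp [this]
  have hkf : finrank (ZMod 2) ↥(LinearMap.ker f) = 6 := ker_finrank hfne
  have hkg : finrank (ZMod 2) ↥(LinearMap.ker g) = 6 := ker_finrank hgne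
  have hkfg : finrank (ZMod 2) ↥(LinearMap.ker (f + g)) = 6 := ker_finrank hfgne
  obtain ⟨a1, ha1⟩ := hyper_count hS hfin h16 _ hkf
  obtain ⟨a2, ha2⟩ := hyper_count hS hfin h16 _ hkg
  obtain ⟨a3, ha3⟩ := hyper_count hS hfin h16 _ hkfg
  have hsum := triple_sum hS hfin h16 W' f g hker
  rw [Nat.odd_iff]
  omega

lemma holeCount_eq (S : Set (Submodule (ZMod 2) V2)) (X : Submodule (ZMod 2) V2) :
    holeCount S X = {v : V2 | HoleVec S v ∧ v ∈ X}.ncard := by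
  rw [holeCount]
  have himg : {P | IsHole S P ∧ P ≤ X}
      = (fun v => Submodule.span (ZMod 2) {v}) '' {v : V2 | HoleVec S v ∧ v ∈ X} := by
    ext P
    simp only [Set.mem_setOf_eq, Set.mem_image]
    constructor
    · rintro ⟨⟨hP1, hPB⟩, hPX⟩
      have hne : P ≠ ⊥ := by
        intro h
        rw [h, finrank_bot] at hP1
        omega
      obtain ⟨v, hvP, hv0⟩ := P.ne_bot_iff.1 hne
      have hsp : Submodule.span (ZMod 2) {v} = P := by
        apply Submodule.eq_of_le_of_finrank_le
        · rwa [Submodule.span_singleton_le_iff_mem]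
        · rw [hP1, finrank_span_singleton hv0]
      refine ⟨v, ⟨⟨hv0, fun B hB hvB => ?_⟩, ?_⟩, hsp⟩
      · exact hPB B hB (hsp ▸ (Submodule.span_singleton_le_iff_mem v B).2 hvB)
      · exact hPX hvP
    · rintro ⟨v, ⟨⟨hv0, hvB⟩, hvX⟩, rfl⟩
      refine ⟨⟨finrank_span_singleton hv0, fun B hB hle => ?_⟩, ?_⟩
      · exact hvB B hB ((Submodule.span_singleton_le_iff_mem v B).1 hle)
      · exact (Submodule.span_singleton_le_iff_mem v X).2 hvX
  rw [himg]
  apply Set.ncard_image_of_injOn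
  rintro v ⟨⟨hv0, -⟩, -⟩ w ⟨⟨hw0, -⟩, -⟩ hvw
  have hvw' : Submodule.span (ZMod 2) {v} = Submodule.span (ZMod 2) {w} := hvw
  have : v ∈ Submodule.span (ZMod 2) {w} := by
    rw [← hvw']; exact Submodule.mem_span_singleton_self v
  obtain ⟨c, hc⟩ := Submodule.mem_span_singleton.1 this
  by_cases hcz : c = 0
  · rw [hcz, zero_smul] at hc; exact absurd hc.symm hv0
  · rw [zmod2_cases c hcz, one_smul] at hc; exact hc.symm

lemma holeVec_mem_holeSpan {S : Set (Submodule (ZMod 2) V2)} {v : V2}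
    (hv : HoleVec S v) : v ∈ holeSpan S := by
  have hsp : Submodule.span (ZMod 2) {v} ≤ holeSpan S := by
    apply le_sSup
    exact ⟨finrank_span_singleton hv.1,
      fun B hB hle => hv.2 B hB ((Submodule.span_singleton_le_iff_mem v B).1 hle)⟩
  exact hsp (Submodule.mem_span_singleton_self v)

theorem holeCount_codim_two_odd (S : Set (Submodule (ZMod 2) V2)) (hS : IsPPS S)
    (h16 : S.ncard = 16) (W : Submodule (ZMod 2) V2) (hW : W ≤ holeSpan S)
    (hdim : finrank (ZMod 2) ↥W = finrank (ZMod 2) ↥(holeSpan S) - 2) :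
    Odd (holeCount S W) := by
  have hfin : S.Finite := by
    by_contra h
    rw [Set.Infinite.ncard h] at h16
    omega
  set N := holeSpan S with hN
  set d := finrank (ZMod 2) ↥N with hd
  -- d ≥ 4
  have h15 : {v : V2 | HoleVec S v}.ncard = 15 := total_holes hS hfin h16
  have hsub : {v : V2 | HoleVec S v} ⊆ {v : V2 | v ∈ N ∧ v ≠ 0} := by
    intro v hv
    exact ⟨holeVec_mem_holeSpan hv, hv.1⟩
  have hle : 15 ≤ {v : V2 | v ∈ N ∧ v ≠ 0}.ncard := by
    rw [← h15]
    exact Set.ncard_le_ncard hsub (Set.toFinite _)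
  have hNcount := count_nonzero N
  rw [← hd] at hNcount
  have hd4 : 4 ≤ d := by
    by_contra h
    push_neg at h
    have : 2 ^ d ≤ 2 ^ 3 := Nat.pow_le_pow_right (by norm_num) (by omega)
    omega
  have hd7 : d ≤ 7 := by
    have := Submodule.finrank_le N
    rwa [finrank_V2] at this
  -- complement
  obtain ⟨C, hC⟩ := Submodule.exists_isCompl N
  have hCd : d + finrank (ZMod 2) ↥C = 7 := by
    have := Submodule.finrank_add_eq_of_isCompl hC
    rwa [finrank_V2] at this
  set W' := W ⊔ C with hW'
  have hWC : W ⊓ C = ⊥ := by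
    rw [← le_bot_iff]
    calc W ⊓ C ≤ N ⊓ C := inf_le_inf_right C hW
    _ = ⊥ := hC.disjoint.eq_bot
  have hW'5 : finrank (ZMod 2) ↥W' = 5 := by
    have := Submodule.finrank_sup_add_finrank_inf_eq W C
    rw [hWC, finrank_bot, hdim] at this
    rw [hW']
    omega
  have hW'N : W' ⊓ N = W := by
    rw [hW', sup_inf_assoc_of_le C hW, inf_comm C N, hC.disjoint.eq_bot, sup_bot_eq]
  have hset : {v : V2 | HoleVec S v ∧ v ∈ W} = {v : V2 | HoleVec S v ∧ v ∈ W'} := by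
    ext v
    simp only [Set.mem_setOf_eq, and_congr_right_iff]
    intro hv
    constructor
    · intro hvW
      exact le_sup_left (α := Submodule (ZMod 2) V2) (a := W) (b := C) hvW
    · intro hvW'
      have : v ∈ W' ⊓ N := ⟨hvW', holeVec_mem_holeSpan hv⟩
      rwa [hW'N] at this
  rw [holeCount_eq, hset]
  exact codim2_odd hS hfin h16 W' hW'5
end

section
/- Let V be a vector space over a field K and let 𝓛 be a nonempty set of 2-dimensional subspaces of V such that no two members of 𝓛 are skew, i.e., any two members of 𝓛 have nonzero intersection. Then at least one of the following holds: (i) there is a 1-dimensional subspace P of V with P ≤ L for all L ∈ 𝓛; (ii) there is a 3-dimensional subspace E of V with L ≤ E for all L ∈ 𝓛. -/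
open Module

theorem lines_no_skew_pair (K : Type*) [Field K] (V : Type*) [AddCommGroup V]
    [Module K V] (𝓛 : Set (Submodule K V)) (hne : 𝓛.Nonempty)
    (hdim : ∀ L ∈ 𝓛, finrank K ↥L = 2)
    (hskew : ∀ L₁ ∈ 𝓛, ∀ L₂ ∈ 𝓛, L₁ ⊓ L₂ ≠ ⊥) :
    (∃ P : Submodule K V, finrank K ↥P = 1 ∧ ∀ L ∈ 𝓛, P ≤ L) ∨
    (∃ E : Submodule K V, finrank K ↥E = 3 ∧ ∀ L ∈ 𝓛, L ≤ E) := by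
  obtain ⟨L₀, hL₀⟩ := hne
  have hfd : ∀ L ∈ 𝓛, FiniteDimensional K L := fun L hL =>
    Module.finite_of_finrank_pos (by rw [hdim L hL]; norm_num)
  -- rank of a nonbot submodule of a line
  have hsub : ∀ (A B : Submodule K V), A ≤ B → A ≠ ⊥ → ∀ _ : FiniteDimensional K B,
      finrank K ↥B = 1 → A = B := by
    intro A B hAB hAne _ hB1
    haveI : FiniteDimensional K A := Submodule.finiteDimensional_of_le hAB
    apply Submodule.eq_of_le_of_finrank_eq hAB
    have h1 : 1 ≤ finrank K ↥A := Submodule.one_le_finrank_iff.mpr hAne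
    have h2 : finrank K ↥A ≤ finrank K ↥B := Submodule.finrank_mono hAB
    omega
  -- the intersection of two distinct lines of 𝓛 has rank 1
  have hinf1 : ∀ L₁ ∈ 𝓛, ∀ L₂ ∈ 𝓛, L₁ ≠ L₂ → finrank K ↥(L₁ ⊓ L₂) = 1 := by
    intro L₁ h₁ L₂ h₂ hne12
    haveI := hfd L₁ h₁
    haveI := hfd L₂ h₂
    haveI : FiniteDimensional K ↥(L₁ ⊓ L₂) :=
      Submodule.finiteDimensional_of_le (inf_le_left (b := L₂))
    have hpos : 1 ≤ finrank K ↥(L₁ ⊓ L₂) :=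
      Submodule.one_le_finrank_iff.mpr (hskew L₁ h₁ L₂ h₂)
    have hle : finrank K ↥(L₁ ⊓ L₂) ≤ finrank K ↥L₁ :=
      Submodule.finrank_mono inf_le_left
    rw [hdim L₁ h₁] at hle
    rcases Nat.lt_or_ge (finrank K ↥(L₁ ⊓ L₂)) 2 with h | h
    · omega
    · exfalso
      have heq : L₁ ⊓ L₂ = L₁ := Submodule.eq_of_le_of_finrank_eq inf_le_left (by
        rw [hdim L₁ h₁]; omega)
      have h12 : L₁ ≤ L₂ := heq ▸ inf_le_right
      exact hne12 (Submodule.eq_of_le_of_finrank_eq h12 (by rw [hdim L₁ h₁, hdim L₂ h₂]))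
  by_cases hall : ∀ L ∈ 𝓛, L = L₀
  · -- all lines equal; pick any point on L₀
    left
    haveI := hfd L₀ hL₀
    have hbot : L₀ ≠ ⊥ := by
      intro h
      have := hdim L₀ hL₀
      rw [h, finrank_bot] at this
      exact absurd this (by norm_num)
    obtain ⟨x, hxL, hx0⟩ := Submodule.ne_bot_iff L₀ |>.mp hbot
    refine ⟨K ∙ x, finrank_span_singleton hx0, ?_⟩
    intro L hL
    rw [hall L hL]
    exact (Submodule.span_singleton_le_iff_mem x L₀).mpr hxL
  · push_neg at hall
    obtain ⟨L₁, hL₁, hne01⟩ := hall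
    haveI := hfd L₀ hL₀
    haveI := hfd L₁ hL₁
    set P := L₀ ⊓ L₁ with hP
    have hP1 : finrank K ↥P = 1 := hinf1 L₀ hL₀ L₁ hL₁ (fun h => hne01 h.symm)
    by_cases hthru : ∀ L ∈ 𝓛, P ≤ L
    · exact Or.inl ⟨P, hP1, hthru⟩
    push_neg at hthru
    obtain ⟨L₃, hL₃, hPL₃⟩ := hthru
    right
    set E := L₀ ⊔ L₁ with hE
    have hE3 : finrank K ↥E = 3 := by
      have := Submodule.finrank_sup_add_finrank_inf_eq L₀ L₁
      rw [← hP, hP1, hdim L₀ hL₀, hdim L₁ hL₁, ← hE] at this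
      omega
    haveI hEfd : FiniteDimensional K E := Module.finite_of_finrank_pos (by omega)
    refine ⟨E, hE3, ?_⟩
    -- key: any line of 𝓛 not contained in E meets E exactly in P
    have key : ∀ L ∈ 𝓛, ¬ L ≤ E → L ⊓ E = P := by
      intro L hL hLE
      haveI := hfd L hL
      haveI : FiniteDimensional K ↥(L ⊓ E) :=
        Submodule.finiteDimensional_of_le (inf_le_right (a := L))
      have hne0 : L ≠ L₀ := fun h => hLE (h ▸ le_sup_left)
      have hne1 : L ≠ L₁ := fun h => hLE (h ▸ le_sup_right)
      have hLE1 : finrank K ↥(L ⊓ E) = 1 := by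
        have hpos : 1 ≤ finrank K ↥(L ⊓ E) := by
          apply Submodule.one_le_finrank_iff.mpr
          intro h
          exact hskew L hL L₀ hL₀ (le_bot_iff.mp (h ▸
            inf_le_inf le_rfl (le_sup_left : L₀ ≤ E)))
        have hle2 : finrank K ↥(L ⊓ E) ≤ finrank K ↥L := Submodule.finrank_mono inf_le_left
        rw [hdim L hL] at hle2
        rcases Nat.lt_or_ge (finrank K ↥(L ⊓ E)) 2 with h | h
        · omega
        · exfalso
          have heq : L ⊓ E = L := Submodule.eq_of_le_of_finrank_eq inf_le_left (by
            rw [hdim L hL]; omega)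
          exact hLE (heq ▸ inf_le_right)
      have h0 : L ⊓ L₀ = L ⊓ E := by
        apply Submodule.eq_of_le_of_finrank_eq
          (inf_le_inf le_rfl (le_sup_left : L₀ ≤ E))
        rw [hLE1, hinf1 L hL L₀ hL₀ hne0]
      have h1 : L ⊓ L₁ = L ⊓ E := by
        apply Submodule.eq_of_le_of_finrank_eq
          (inf_le_inf le_rfl (le_sup_right : L₁ ≤ E))
        rw [hLE1, hinf1 L hL L₁ hL₁ hne1]
      have hLEP : L ⊓ E ≤ P :=
        le_inf (h0 ▸ inf_le_right) (h1 ▸ inf_le_right)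
      haveI : FiniteDimensional K ↥P := Module.finite_of_finrank_pos (by omega)
      exact Submodule.eq_of_le_of_finrank_eq hLEP (by rw [hLE1, hP1])
    have hL₃E : L₃ ≤ E := by
      by_contra h
      exact hPL₃ ((key L₃ hL₃ h) ▸ (inf_le_left : L₃ ⊓ E ≤ L₃))
    intro L hL
    by_contra hLE
    have hLEP := key L hL hLE
    have hne3 : L ≠ L₃ := fun h => hLE (h ▸ hL₃E)
    -- L ⊓ L₃ is a nonbot submodule of P
    have h3 : L ⊓ L₃ ≤ P := hLEP ▸ le_inf inf_le_left (le_trans inf_le_right hL₃E)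
    haveI : FiniteDimensional K ↥P := Module.finite_of_finrank_pos (by omega)
    have : L ⊓ L₃ = P := hsub _ _ h3 (hskew L hL L₃ hL₃) inferInstance hP1
    exact hPL₃ (this ▸ (inf_le_right : L ⊓ L₃ ≤ L₃))
end
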